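/- arXiv:2111.04869 — 9 statements merged into one kernel-verified Lean document; each statement's English description precedes it below -/
import Mathlib

section
/- Let G be an amply regular graph with parameters (n, d, α, β) with α = 1 and β > 1. For any edge xy, let N_x = Γ(x) \ ({y} ∪ Γ(y)) and N_y = Γ(y) \ ({x} ∪ Γ(x)). Then every vertex v ∈ N_x has exactly β − 1 neighbors in N_y, and every vertex w ∈ N_y has exactly β − 1 neighbors in N_x. -/
open Finset SimpleGraph

variable {V : Type*} [Fintype V] [DecidableEq V]

/-- A graph is amply regular with parameters `(n, d, a, b)` if it is `d`-regular on `n`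
vertices, adjacent vertices have exactly `a` common neighbors, and vertices at distance 2
have exactly `b` common neighbors. -/
def SimpleGraph.IsAmplyRegular (G : SimpleGraph V) [DecidableRel G.Adj]
    (n d a b : ℕ) : Prop :=
  Fintype.card V = n ∧ G.IsRegularOfDegree d ∧
    (∀ x y, G.Adj x y → (G.neighborFinset x ∩ G.neighborFinset y).card = a) ∧
    (∀ x y, G.dist x y = 2 → (G.neighborFinset x ∩ G.neighborFinset y).card = b)

/-- The measure `μ_x^p` giving mass `p` to `x` and `(1-p)/deg x` to each neighbor of `x`. -/
noncomputable def muMeasure (G : SimpleGraph V) [DecidableRel G.Adj] (p : ℝ) (x : V) :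
    V → ℝ :=
  fun v => if v = x then p else if G.Adj x v then (1 - p) / (G.degree x : ℝ) else 0

/-- `pi` is a transport plan between `mu1` and `mu2`. -/
def IsTransportPlan (mu1 mu2 : V → ℝ) (pi : V → V → ℝ) : Prop :=
  (∀ u v, 0 ≤ pi u v) ∧ (∀ u, ∑ v, pi u v = mu1 u) ∧ (∀ v, ∑ u, pi u v = mu2 v)

/-- The 1-Wasserstein distance between two measures w.r.t. the graph distance. -/
noncomputable def W1 (G : SimpleGraph V) (mu1 mu2 : V → ℝ) : ℝ :=
  sInf {c : ℝ | ∃ pi, IsTransportPlan mu1 mu2 pi ∧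
    c = ∑ u, ∑ v, (G.dist u v : ℝ) * pi u v}

/-- The Lin-Lu-Yau curvature of an edge of a `d`-regular graph, via the idleness
`p = 1/(d+1)` formula of Bourne et al. -/
noncomputable def kappaLLY (G : SimpleGraph V) [DecidableRel G.Adj] (d : ℕ) (x y : V) :
    ℝ :=
  ((d + 1 : ℝ) / d) *
    (1 - W1 G (muMeasure G (1 / (d + 1 : ℝ)) x) (muMeasure G (1 / (d + 1 : ℝ)) y))

/-- `N_x = Γ(x) \ ({y} ∪ Γ(y))`. -/
def Nset (G : SimpleGraph V) [DecidableRel G.Adj] (x y : V) : Finset V :=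
  G.neighborFinset x \ insert y (G.neighborFinset y)

/-- `Δ_{xy} = Γ(x) ∩ Γ(y)`. -/
def Dset (G : SimpleGraph V) [DecidableRel G.Adj] (x y : V) : Finset V :=
  G.neighborFinset x ∩ G.neighborFinset y

lemma aux_one_side (G : SimpleGraph V) [DecidableRel G.Adj] {n d b : ℕ}
    (h : G.IsAmplyRegular n d 1 b)
    (x y : V) (hxy : G.Adj x y) :
    ∀ v ∈ Nset G x y, (G.neighborFinset v ∩ Nset G y x).card = b - 1 := by
  obtain ⟨-, -, hα, hβ⟩ := h
  intro v hv
  simp only [Nset, mem_sdiff, mem_insert, mem_neighborFinset, not_or] at hv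
  obtain ⟨hvx, hvy, hvady⟩ := hv
  -- v is at distance 2 from y
  have hdist : G.dist v y = 2 := by
    have hle : G.dist v y ≤ 2 := by
      have := SimpleGraph.dist_le (SimpleGraph.Walk.cons hvx.symm
        (SimpleGraph.Walk.cons hxy SimpleGraph.Walk.nil))
      simpa using this
    have hne0 : G.dist v y ≠ 0 := by
      intro h0
      rcases SimpleGraph.dist_eq_zero_iff_eq_or_not_reachable.mp h0 with h' | h'
      · exact hvy h'
      · exact h' ⟨SimpleGraph.Walk.cons hvx.symm
          (SimpleGraph.Walk.cons hxy SimpleGraph.Walk.nil)⟩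
    have hne1 : G.dist v y ≠ 1 := by
      intro h1
      exact hvady (SimpleGraph.dist_eq_one_iff_adj.mp h1).symm
    omega
  have hcard : (G.neighborFinset v ∩ G.neighborFinset y).card = b := hβ v y hdist
  -- no common neighbor of v and y is adjacent to x (except none; x itself is one)
  have hnox : ∀ z, G.Adj v z → G.Adj y z → ¬ G.Adj x z := by
    intro z hvz hyz hxz
    have h1 := hα x z hxz
    have hsub : ({y, v} : Finset V) ⊆ G.neighborFinset x ∩ G.neighborFinset z := by
      intro t ht
      simp only [mem_insert, mem_singleton] at ht
      simp only [mem_inter, mem_neighborFinset]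
      rcases ht with rfl | rfl
      · exact ⟨hxy, hyz.symm⟩
      · exact ⟨hvx, hvz.symm⟩
    have hle := Finset.card_le_card hsub
    rw [h1, Finset.card_insert_of_notMem
      (by simp only [Finset.mem_singleton]; exact fun h' => hvy h'.symm),
      Finset.card_singleton] at hle
    omega
  have hset : G.neighborFinset v ∩ Nset G y x
      = (G.neighborFinset v ∩ G.neighborFinset y).erase x := by
    ext z
    simp only [Nset, mem_inter, mem_sdiff, mem_insert, mem_neighborFinset, not_or,
      Finset.mem_erase]
    constructor
    · rintro ⟨hvz, hyz, hzx, -⟩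
      exact ⟨fun hz => hzx hz, hvz, hyz⟩
    · rintro ⟨hzx, hvz, hyz⟩
      exact ⟨hvz, hyz, fun hz => hzx hz, hnox z hvz hyz⟩
  rw [hset, Finset.card_erase_of_mem, hcard]
  simp only [mem_inter, mem_neighborFinset]
  exact ⟨hvx.symm, hxy.symm⟩

/-- In an amply regular graph with `α = 1 < β`, for any edge `xy`, every vertex of `N_x`
has exactly `β - 1` neighbors in `N_y` and vice versa. -/
theorem stmt0 (G : SimpleGraph V) [DecidableRel G.Adj] {n d a b : ℕ}
    (h : G.IsAmplyRegular n d a b) (ha : a = 1) (hb : 1 < b)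
    (x y : V) (hxy : G.Adj x y) :
    (∀ v ∈ Nset G x y, (G.neighborFinset v ∩ Nset G y x).card = b - 1) ∧
    (∀ w ∈ Nset G y x, (G.neighborFinset w ∩ Nset G x y).card = b - 1) := by
  subst ha
  exact ⟨aux_one_side G h x y hxy, aux_one_side G h y x hxy.symm⟩
end

section
/- Let G be an amply regular graph with parameters (n, d, α, β) with α = 1 and β > 1. For any edge xy, consider the bipartite graph H between N_x = Γ(x) \ ({y} ∪ Γ(y)) and N_y = Γ(y) \ ({x} ∪ Γ(x)), with edges the edges of G between N_x and N_y. Then for every subset A ⊆ N_x, the set of neighbors of A in N_y has cardinality at least |A|. -/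
open Finset SimpleGraph

variable {V : Type*} [Fintype V] [DecidableEq V]

set_option linter.unusedSectionVars false in
lemma dist_two' {G : SimpleGraph V} {u v w : V} (huv : G.Adj u v) (hvw : G.Adj v w)
    (hne : u ≠ w) (hnadj : ¬ G.Adj u w) : G.dist u w = 2 := by
  have h1 : G.dist u w ≤ 2 := by
    have := SimpleGraph.dist_le ((huv.toWalk).append hvw.toWalk)
    simpa using this
  have h2 : G.dist u w ≠ 0 := by
    rw [Ne, SimpleGraph.dist_eq_zero_iff_eq_or_not_reachable]
    push_neg
    exact ⟨hne, ((huv.toWalk).append hvw.toWalk).reachable⟩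
  have h3 : G.dist u w ≠ 1 := by
    rw [Ne, SimpleGraph.dist_eq_one_iff_adj]
    exact hnadj
  omega

lemma mem_Nset_iff {G : SimpleGraph V} [DecidableRel G.Adj] {x y v : V} :
    v ∈ Nset G x y ↔ G.Adj x v ∧ v ≠ y ∧ ¬ G.Adj y v := by
  simp [Nset]

/-- Hall condition: in an amply regular graph with `α = 1 < β`, for any edge `xy` and any
`A ⊆ N_x`, the set of neighbors of `A` in `N_y` has cardinality at least `|A|`. -/
theorem stmt1 (G : SimpleGraph V) [DecidableRel G.Adj] {n d a b : ℕ}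
    (h : G.IsAmplyRegular n d a b) (ha : a = 1) (hb : 1 < b)
    (x y : V) (hxy : G.Adj x y) :
    ∀ A ⊆ Nset G x y,
      A.card ≤ ((Nset G y x).filter (fun w => ∃ v ∈ A, G.Adj v w)).card := by
  obtain ⟨-, -, hα, hβ⟩ := h
  intro A hA
  set Ny := Nset G y x with hNy
  set B := Ny.filter (fun w => ∃ v ∈ A, G.Adj v w) with hBdef
  -- each v ∈ A has exactly b - 1 neighbors in Ny
  have key1 : ∀ v ∈ A, (Ny.filter (fun w => G.Adj v w)).card = b - 1 := by
    intro v hv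
    obtain ⟨hvx, hvy, hvny⟩ := mem_Nset_iff.mp (hA hv)
    have hdist : G.dist v y = 2 :=
      dist_two' hvx.symm hxy hvy (fun hc => hvny hc.symm)
    have hcard : (G.neighborFinset v ∩ G.neighborFinset y).card = b := hβ v y hdist
    have hset : Ny.filter (fun w => G.Adj v w)
        = (G.neighborFinset v ∩ G.neighborFinset y) \ {x} := by
      ext w
      simp only [Finset.mem_filter, Finset.mem_sdiff, Finset.mem_inter,
        mem_neighborFinset, Finset.mem_singleton, hNy, mem_Nset_iff]
      constructor
      · rintro ⟨⟨hwy, hwx, hwnx⟩, hvw⟩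
        exact ⟨⟨hvw, hwy⟩, hwx⟩
      · rintro ⟨⟨hvw, hwy⟩, hwx⟩
        refine ⟨⟨hwy, hwx, fun hxw => ?_⟩, hvw⟩
        -- w adjacent to both x and y, and to v: contradicts α = 1
        have h1 : (G.neighborFinset x ∩ G.neighborFinset w).card = 1 := by
          rw [← ha]; exact hα x w hxw
        have hy_mem : y ∈ G.neighborFinset x ∩ G.neighborFinset w := by
          simp [mem_neighborFinset, hxy, hwy.symm]
        have hv_mem : v ∈ G.neighborFinset x ∩ G.neighborFinset w := by
          simp [mem_neighborFinset, hvx, hvw.symm]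
        have : ({y, v} : Finset V) ⊆ G.neighborFinset x ∩ G.neighborFinset w := by
          intro z hz; simp at hz; rcases hz with rfl | rfl <;> assumption
        have hle := Finset.card_le_card this
        rw [Finset.card_insert_of_notMem (by simp [Ne.symm hvy]),
          Finset.card_singleton] at hle
        omega
    rw [hset, Finset.card_sdiff_of_subset, hcard, Finset.card_singleton]
    intro z hz
    simp only [Finset.mem_singleton] at hz
    subst hz
    simp only [Finset.mem_inter, mem_neighborFinset]
    exact ⟨hvx.symm, hxy.symm⟩
  -- each w ∈ Ny has at most b - 1 neighbors in A
  have key2 : ∀ w ∈ Ny, (A.filter (fun v => G.Adj v w)).card ≤ b - 1 := by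
    intro w hw
    obtain ⟨hwy, hwx, hwnx⟩ := mem_Nset_iff.mp hw
    have hdist : G.dist w x = 2 :=
      dist_two' hwy.symm hxy.symm hwx (fun hc => hwnx hc.symm)
    have hcard : (G.neighborFinset w ∩ G.neighborFinset x).card = b := hβ w x hdist
    have hsub : A.filter (fun v => G.Adj v w)
        ⊆ (G.neighborFinset w ∩ G.neighborFinset x) \ {y} := by
      intro v hv
      simp only [Finset.mem_filter] at hv
      obtain ⟨hvA, hvw⟩ := hv
      obtain ⟨hvx, hvy, hvny⟩ := mem_Nset_iff.mp (hA hvA)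
      simp only [Finset.mem_sdiff, Finset.mem_inter, mem_neighborFinset,
        Finset.mem_singleton]
      exact ⟨⟨hvw.symm, hvx⟩, hvy⟩
    have := Finset.card_le_card hsub
    rw [Finset.card_sdiff_of_subset (by
        simp only [Finset.singleton_subset_iff, Finset.mem_inter, mem_neighborFinset]
        exact ⟨hwy.symm, hxy⟩), hcard,
      Finset.card_singleton] at this
    exact this
  -- double counting
  have hdc : ∑ v ∈ A, (Ny.filter (fun w => G.Adj v w)).card
      = ∑ w ∈ Ny, (A.filter (fun v => G.Adj v w)).card := by
    simp_rw [Finset.card_filter]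
    exact Finset.sum_comm
  have hBsum : ∑ w ∈ Ny, (A.filter (fun v => G.Adj v w)).card
      = ∑ w ∈ B, (A.filter (fun v => G.Adj v w)).card := by
    rw [hBdef]
    refine (Finset.sum_filter_of_ne ?_).symm
    intro w _ hne
    obtain ⟨v, hv⟩ := Finset.card_pos.mp (Nat.pos_of_ne_zero hne)
    simp only [Finset.mem_filter] at hv
    exact ⟨v, hv.1, hv.2⟩
  have h1 : (b - 1) * A.card = ∑ v ∈ A, (Ny.filter (fun w => G.Adj v w)).card := by
    rw [Finset.sum_congr rfl key1, Finset.sum_const, smul_eq_mul, mul_comm]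
  have h2 : ∑ w ∈ B, (A.filter (fun v => G.Adj v w)).card ≤ (b - 1) * B.card := by
    rw [mul_comm, ← smul_eq_mul, ← Finset.sum_const]
    exact Finset.sum_le_sum fun w hw => key2 w (Finset.mem_of_mem_filter w hw)
  have : (b - 1) * A.card ≤ (b - 1) * B.card := by
    rw [h1, hdc, hBsum]; exact h2
  exact Nat.le_of_mul_le_mul_left this (by omega)
end

section
/- Let G be a d-regular graph and xy an edge. If there exists a bijection f : Γ(x) \ {y} → Γ(y) \ {x} such that for each v ∈ Γ(x) \ {y}, either f(v) = v, or f(v) is adjacent to v, or f(v) = x and v = y (i.e., the mass at each neighbor moves distance at most 1), and moreover at least m vertices v satisfy f(v) = v, then the Wasserstein distance W₁(μ_x^{1/(d+1)}, μ_y^{1/(d+1)}) is at most (d − 1 − m)/(d + 1). -/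
open Finset SimpleGraph

variable {V : Type*} [Fintype V] [DecidableEq V]

/-! Keep the mass at `x` and at `y` in place and send the mass at each `v ∈ Γ(x) \ {y}` to `f v`.
With idleness `1/(d+1)` both measures are uniform of mass `1/(d+1)` on the closed neighbourhoods
and this map is a bijection between them, so it is a transport plan. It moves mass `1/(d+1)` by
distance one for each neighbour not fixed by `f`, and at most `d - 1 - m` are not fixed. -/

omit [DecidableEq V] in
lemma W1_le_cost_of_isTransportPlan (G : SimpleGraph V) {μ ν : V → ℝ} {π : V → V → ℝ}
    (hπ : IsTransportPlan μ ν π) : W1 G μ ν ≤ ∑ u, ∑ v, (G.dist u v : ℝ) * π u v := by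
  refine csInf_le ⟨0, ?_⟩ ⟨π, hπ, rfl⟩
  rintro c ⟨π', hπ', rfl⟩
  exact sum_nonneg fun u _ => sum_nonneg fun v _ => mul_nonneg (Nat.cast_nonneg _) (hπ'.1 u v)

lemma isTransportPlan_of_bijOn {A B : Finset V} {g : V → V} (hg : Set.BijOn g A B) {p : ℝ}
    (hp : 0 ≤ p) :
    IsTransportPlan (fun u => if u ∈ A then p else 0) (fun v => if v ∈ B then p else 0)
      (fun u v => if u ∈ A ∧ v = g u then p else 0) := by
  refine ⟨fun u v => by positivity, fun u => ?_, fun v => ?_⟩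
  · by_cases hu : u ∈ A <;> simp [hu]
  · have hB : A.image g = B := by exact_mod_cast hg.image_eq
    simp_rw [ite_and]
    rw [sum_ite_mem, univ_inter, ← hB,
      ← sum_image (f := fun w => if v = w then p else 0) fun a ha b hb => hg.injOn ha hb,
      sum_ite_eq]

lemma W1_le_of_bijOn (G : SimpleGraph V) {A B : Finset V} {g : V → V} (hg : Set.BijOn g A B)
    {p : ℝ} (hp : 0 ≤ p) :
    W1 G (fun u => if u ∈ A then p else 0) (fun v => if v ∈ B then p else 0) ≤
      p * ∑ u ∈ A, (G.dist u (g u) : ℝ) := by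
  refine (W1_le_cost_of_isTransportPlan G (isTransportPlan_of_bijOn hg hp)).trans_eq ?_
  simp [ite_and, mul_sum, mul_comm]

lemma muMeasure_eq_ite_mem_insert (G : SimpleGraph V) [DecidableRel G.Adj] {d : ℕ} {x : V}
    (hx : G.degree x = d) :
    muMeasure G (1 / (d + 1 : ℝ)) x =
      fun v => if v ∈ insert x (G.neighborFinset x) then 1 / (d + 1 : ℝ) else 0 := by
  ext v
  by_cases hvx : v = x
  · simp [muMeasure, hvx]
  by_cases hxv : G.Adj x v
  · have hd : (d : ℝ) ≠ 0 := by
      rw [← hx, Nat.cast_ne_zero, ← pos_iff_ne_zero, G.degree_pos_iff_exists_adj]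
      exact ⟨v, hxv⟩
    simp only [muMeasure, hvx, hxv, hx, if_false, if_true, mem_insert, mem_neighborFinset,
      or_true]
    field_simp
    ring
  · simp [muMeasure, hvx, hxv]

omit [Fintype V] in
lemma sum_dist_le_card_filter_ne (G : SimpleGraph V) (S : Finset V) {f : V → V}
    (hf : ∀ u ∈ S, f u ≠ u → G.Adj u (f u)) :
    ∑ u ∈ S, G.dist u (f u) ≤ #(S.filter fun u => f u ≠ u) := by
  rw [card_eq_sum_ones, sum_filter]
  refine sum_le_sum fun u hu => ?_
  split_ifs with h
  · exact (dist_eq_one_iff_adj.mpr (hf u hu h)).le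
  · simp [not_not.mp h]

lemma bijOn_insert_neighborFinset_of_bijOn_sdiff (G : SimpleGraph V) [DecidableRel G.Adj]
    {x y : V} (hxy : G.Adj x y) {f : V → V}
    (hf : Set.BijOn f ↑(G.neighborFinset x \ {y}) ↑(G.neighborFinset y \ {x})) :
    Set.BijOn (fun u => if u ∈ G.neighborFinset x \ {y} then f u else u)
      ↑(insert x (G.neighborFinset x)) ↑(insert y (G.neighborFinset y)) := by
  set g := fun u => if u ∈ G.neighborFinset x \ {y} then f u else u
  have hgx : g x = x := if_neg (by simp)
  have hgy : g y = y := if_neg (by simp)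
  have hext := ((hf.congr (f₂ := g) fun u hu => (if_pos hu).symm).insert (a := y)
    (by rw [hgy]; simp)).insert (a := x) (by rw [hgx, hgy]; simp [hxy.ne])
  rwa [hgx, hgy, Set.insert_comm x y (↑(G.neighborFinset y \ {x}) : Set V), ← coe_insert,
    ← coe_insert, ← coe_insert, ← coe_insert, sdiff_singleton_eq_erase, sdiff_singleton_eq_erase,
    insert_erase ((mem_neighborFinset G x y).mpr hxy),
    insert_erase ((mem_neighborFinset G y x).mpr hxy.symm)] at hext

/-- If the mass at each neighbor can be moved distance at most `1` via a bijection
`f : Γ(x)\{y} → Γ(y)\{x}` fixing at least `m` vertices, then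
`W₁(μ_x^{1/(d+1)}, μ_y^{1/(d+1)}) ≤ (d - 1 - m)/(d + 1)`. -/
theorem stmt3 (G : SimpleGraph V) [DecidableRel G.Adj] {d m : ℕ}
    (hreg : G.IsRegularOfDegree d) (x y : V) (hxy : G.Adj x y) (f : V → V)
    (hbij : Set.BijOn f ↑(G.neighborFinset x \ {y}) ↑(G.neighborFinset y \ {x}))
    (hmove : ∀ v ∈ G.neighborFinset x \ {y},
      f v = v ∨ G.Adj v (f v) ∨ (f v = x ∧ v = y))
    (hm : m ≤ ((G.neighborFinset x \ {y}).filter (fun v => f v = v)).card) :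
    W1 G (muMeasure G (1 / (d + 1 : ℝ)) x) (muMeasure G (1 / (d + 1 : ℝ)) y) ≤
      ((d : ℝ) - 1 - m) / (d + 1) := by
  classical
  set S := G.neighborFinset x \ {y} with hS
  set g := fun u => if u ∈ S then f u else u
  have hyx : y ∈ G.neighborFinset x := (mem_neighborFinset G x y).mpr hxy
  have hcost : ∑ u ∈ insert x (G.neighborFinset x), G.dist u (g u) = ∑ u ∈ S, G.dist u (f u) := by
    have hSsub : S ⊆ insert x (G.neighborFinset x) := sdiff_subset.trans (subset_insert x _)
    rw [← sum_subset hSsub fun u _ hu => by simp [g, hu]]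
    exact sum_congr rfl fun u hu => by simp [g, hu]
  have hcost_le : ∑ u ∈ S, G.dist u (f u) + m + 1 ≤ d := by
    have hmoved := sum_dist_le_card_filter_ne G S fun u hu hfu =>
      (hmove u hu).resolve_left hfu |>.resolve_right fun h => (mem_sdiff.mp hu).2 (by simp [h.2])
    have hsplit := card_filter_add_card_filter_not (s := S) (fun u => f u = u)
    have hcardS : #S + 1 = d := by
      rw [hS, sdiff_singleton_eq_erase, card_erase_add_one hyx, card_neighborFinset_eq_degree,
        hreg x]
    simp only [ne_eq] at hmoved
    omega
  rw [muMeasure_eq_ite_mem_insert G (hreg x), muMeasure_eq_ite_mem_insert G (hreg y)]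
  calc _ ≤ 1 / (d + 1 : ℝ) * ∑ u ∈ insert x (G.neighborFinset x), (G.dist u (g u) : ℝ) :=
        W1_le_of_bijOn G (bijOn_insert_neighborFinset_of_bijOn_sdiff G hxy hbij) (by positivity)
    _ ≤ 1 / (d + 1 : ℝ) * (d - 1 - m) := by
        gcongr
        have := (Nat.cast_le (α := ℝ)).mpr hcost_le
        rw [← Nat.cast_sum, hcost]
        push_cast at this ⊢
        linarith
    _ = ((d : ℝ) - 1 - m) / (d + 1) := by ring
end

section
/- Let G be an amply regular graph with parameters (n, d, α, β) with α = 1 and β > 1, and let xy be an edge with common neighbor set Δ_{xy} = {x₀}. Then W₁(μ_x^{1/(d+1)}, μ_y^{1/(d+1)}) ≤ (d − 2)/(d + 1). -/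
/-!
For `p = 1/(d+1)` one has `(1 - p)/d = p`, so both measures put mass `p` on every vertex of the
closed neighbourhoods. The mass on `{x, y, x₀}` stays put. Because `α = 1`, no vertex of
`N_x = Γ(x) \ ({y} ∪ Γ(y))` is adjacent to `x₀`; hence `u ∈ N_x` is at distance 2 from `y`, and
its `β` common neighbours with `y` are `x` together with `β - 1` vertices of `N_y`. Symmetrically
for `N_y`, so the bipartite graph between `N_x` and `N_y` is `(β - 1)`-regular, and spreading the
mass of each `u ∈ N_x` evenly over its neighbours in `N_y` moves mass `p |N_x| = p (d - 2)` along
edges.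
-/

open Finset SimpleGraph

variable {V : Type*} [Fintype V] [DecidableEq V]

section Transport

variable {α : Type*} [Fintype α]

noncomputable def transportCost (G : SimpleGraph α) (pi : α → α → ℝ) : ℝ :=
  ∑ u, ∑ v, (G.dist u v : ℝ) * pi u v

lemma W1_le_transportCost {G : SimpleGraph α} {mu1 mu2 : α → ℝ} {pi : α → α → ℝ}
    (hpi : IsTransportPlan mu1 mu2 pi) : W1 G mu1 mu2 ≤ transportCost G pi := by
  refine csInf_le ⟨0, ?_⟩ ⟨pi, hpi, rfl⟩
  rintro _ ⟨pi', hpi', rfl⟩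
  exact sum_nonneg fun u _ => sum_nonneg fun v _ => mul_nonneg (Nat.cast_nonneg _) (hpi'.1 u v)

lemma transportCost_add (G : SimpleGraph α) (pi1 pi2 : α → α → ℝ) :
    transportCost G (pi1 + pi2) = transportCost G pi1 + transportCost G pi2 := by
  simp only [transportCost, Pi.add_apply, mul_add, sum_add_distrib]

lemma transportCost_diagonal [DecidableEq α] (G : SimpleGraph α) (m : α → ℝ) :
    transportCost G (fun u v => if u = v then m u else 0) = 0 :=
  sum_eq_zero fun u _ => sum_eq_zero fun v _ => by dsimp only; split_ifs with h <;> simp [h]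

lemma IsTransportPlan.transportCost_eq_sum_of_adj {G : SimpleGraph α} {mu1 mu2 : α → ℝ}
    {pi : α → α → ℝ} (hpi : IsTransportPlan mu1 mu2 pi) (hadj : ∀ u v, pi u v ≠ 0 → G.Adj u v) :
    transportCost G pi = ∑ u, mu1 u := by
  refine sum_congr rfl fun u _ => ?_
  rw [← hpi.2.1 u]
  refine sum_congr rfl fun v _ => ?_
  by_cases h : pi u v = 0
  · simp [h]
  · simp [dist_eq_one_iff_adj.mpr (hadj u v h)]

lemma IsTransportPlan.add {a1 b1 a2 b2 : α → ℝ} {pi1 pi2 : α → α → ℝ}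
    (h1 : IsTransportPlan a1 b1 pi1) (h2 : IsTransportPlan a2 b2 pi2) :
    IsTransportPlan (a1 + a2) (b1 + b2) (pi1 + pi2) := by
  refine ⟨fun u v => add_nonneg (h1.1 u v) (h2.1 u v), fun u => ?_, fun v => ?_⟩
  · simp only [Pi.add_apply, sum_add_distrib, h1.2.1, h2.2.1]
  · simp only [Pi.add_apply, sum_add_distrib, h1.2.2, h2.2.2]

lemma isTransportPlan_diagonal [DecidableEq α] {m : α → ℝ} (hm : 0 ≤ m) :
    IsTransportPlan m m (fun u v => if u = v then m u else 0) := by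
  refine ⟨fun u v => ?_, fun u => by simp, fun v => by simp⟩
  dsimp only
  split_ifs
  exacts [hm u, le_rfl]

lemma isTransportPlan_biregular [DecidableEq α] {S T : Finset α} {r : α → α → Prop}
    [DecidableRel r] {k : ℕ} (hk : k ≠ 0) {c : ℝ} (hc : 0 ≤ c) (hS : ∀ u ∈ S, #{v ∈ T | r u v} = k)
    (hT : ∀ v ∈ T, #{u ∈ S | r u v} = k) :
    IsTransportPlan ((S : Set α).indicator fun _ => c) ((T : Set α).indicator fun _ => c)
      (fun u v => if u ∈ S ∧ v ∈ T ∧ r u v then c / k else 0) := by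
  refine ⟨fun u v => ?_, fun u => ?_, fun v => ?_⟩
  · dsimp only
    split_ifs
    exacts [div_nonneg hc k.cast_nonneg, le_rfl]
  · by_cases hu : u ∈ S
    · simp only [hu, true_and, ite_and, sum_ite_mem, univ_inter, ← sum_filter, sum_const,
        hS u hu, nsmul_eq_mul, Set.indicator_of_mem (mem_coe.2 hu)]
      field_simp
    · simp [hu]
  · by_cases hv : v ∈ T
    · simp only [hv, true_and, ite_and, sum_ite_mem, univ_inter, ← sum_filter, sum_const,
        hT v hv, nsmul_eq_mul, Set.indicator_of_mem (mem_coe.2 hv)]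
      field_simp
    · simp [hv]

end Transport

section EdgeNeighborhoods

variable (G : SimpleGraph V) [DecidableRel G.Adj]

lemma Dset_comm (x y : V) : Dset G x y = Dset G y x := inter_comm _ _

variable {G}

lemma mem_Dset {x y w : V} : w ∈ Dset G x y ↔ G.Adj x w ∧ G.Adj y w := by
  simp [Dset]

lemma mem_Nset {x y u : V} : u ∈ Nset G x y ↔ G.Adj x u ∧ u ≠ y ∧ ¬G.Adj y u := by
  simp [Nset, not_or]

lemma insert_neighborFinset_eq_union {x y : V} (hxy : G.Adj x y) :
    insert x (G.neighborFinset x) = insert x (insert y (Dset G x y)) ∪ Nset G x y := by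
  ext u
  simp only [mem_union, mem_insert, mem_neighborFinset, mem_Dset, mem_Nset]
  by_cases hux : u = x
  · simp [hux]
  by_cases huy : u = y
  · simp [huy, hxy]
  by_cases hyu : G.Adj y u <;> simp [hux, huy, hyu]

lemma disjoint_Nset (x y : V) : Disjoint (insert x (insert y (Dset G x y))) (Nset G x y) := by
  rw [Finset.disjoint_left]
  simp only [mem_insert, mem_Dset, mem_Nset]
  rintro u (rfl | rfl | ⟨-, hyu⟩) ⟨hxu, huy, hyu'⟩
  exacts [G.loopless.irrefl u hxu, huy rfl, hyu' hyu]

lemma dist_eq_two_of_mem_Nset {x y u : V} (hxy : G.Adj x y) (hu : u ∈ Nset G x y) :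
    G.dist u y = 2 := by
  obtain ⟨hxu, huy, hyu⟩ := mem_Nset.1 hu
  let walk := hxu.symm.toWalk.append hxy.toWalk
  have hle : G.dist u y ≤ 2 := G.dist_le walk
  have hne0 : G.dist u y ≠ 0 := (Reachable.pos_dist_of_ne ⟨walk⟩ huy).ne'
  have hne1 : G.dist u y ≠ 1 := fun h => hyu (dist_eq_one_iff_adj.1 h).symm
  omega

lemma not_adj_of_mem_Nset_of_mem_Dset (hα : ∀ x y, G.Adj x y → #(Dset G x y) = 1) {x y u w : V}
    (hxy : G.Adj x y) (hu : u ∈ Nset G x y) (hw : w ∈ Dset G x y) : ¬G.Adj u w := by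
  intro huw
  obtain ⟨hxw, hyw⟩ := mem_Dset.1 hw
  obtain ⟨hxu, huy, -⟩ := mem_Nset.1 hu
  -- `y` and `u` are both common neighbours of the edge `xw`, which has only one
  obtain ⟨z, hz⟩ := card_eq_one.1 (hα x w hxw)
  have hyz : y ∈ ({z} : Finset V) := hz ▸ mem_Dset.2 ⟨hxy, hyw.symm⟩
  have huz : u ∈ ({z} : Finset V) := hz ▸ mem_Dset.2 ⟨hxu, huw.symm⟩
  exact huy ((mem_singleton.1 huz).trans (mem_singleton.1 hyz).symm)

lemma Dset_eq_insert_filter_adj (hα : ∀ x y, G.Adj x y → #(Dset G x y) = 1) {x y u : V}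
    (hxy : G.Adj x y) (hu : u ∈ Nset G x y) :
    Dset G u y = insert x {v ∈ Nset G y x | G.Adj u v} := by
  obtain ⟨hxu, -, -⟩ := mem_Nset.1 hu
  ext v
  simp only [mem_insert, mem_filter, mem_Dset, mem_Nset]
  by_cases hvx : v = x
  · simp [hvx, hxu.symm, hxy.symm]
  by_cases hxv : G.Adj x v
  · have : ¬(G.Adj u v ∧ G.Adj y v) := fun ⟨huv, hyv⟩ =>
      not_adj_of_mem_Nset_of_mem_Dset hα hxy hu (mem_Dset.2 ⟨hxv, hyv⟩) huv
    simp [hvx, hxv, this]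
  · simp only [hvx, hxv, ne_eq, not_false_eq_true, and_self, and_true, false_or]
    exact and_comm

lemma card_filter_adj_Nset (hα : ∀ x y, G.Adj x y → #(Dset G x y) = 1) {b : ℕ}
    (hβ : ∀ x y, G.dist x y = 2 → #(Dset G x y) = b) {x y u : V} (hxy : G.Adj x y)
    (hu : u ∈ Nset G x y) : #{v ∈ Nset G y x | G.Adj u v} = b - 1 := by
  have := hβ u y (dist_eq_two_of_mem_Nset hxy hu)
  rw [Dset_eq_insert_filter_adj hα hxy hu, card_insert_of_notMem] at this
  · omega
  · simp [mem_Nset]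

lemma card_Nset_add_two {d : ℕ} (hreg : G.IsRegularOfDegree d) {x y x₀ : V} (hxy : G.Adj x y)
    (hΔ : Dset G x y = {x₀}) : #(Nset G x y) + 2 = d := by
  have hx₀ := mem_Dset.1 (hΔ ▸ mem_singleton_self x₀)
  have hcard := congrArg card (insert_neighborFinset_eq_union hxy)
  rw [card_union_of_disjoint (disjoint_Nset x y), card_insert_of_notMem (by simp),
    card_neighborFinset_eq_degree, hreg x, hΔ, card_insert_of_notMem, card_insert_of_notMem,
    card_singleton] at hcard
  · omega
  · simpa using hx₀.2.ne
  · simp [hxy.ne, hx₀.1.ne]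

lemma muMeasure_eq_indicator {d : ℕ} (hreg : G.IsRegularOfDegree d) (x : V) :
    muMeasure G (1 / (d + 1 : ℝ)) x =
      (↑(insert x (G.neighborFinset x)) : Set V).indicator fun _ => 1 / (d + 1 : ℝ) := by
  ext v
  by_cases hvx : v = x
  · simp [muMeasure, hvx]
  by_cases hxv : G.Adj x v
  · have hd : (d : ℝ) ≠ 0 := by
      have := hreg x ▸ G.degree_pos_iff_exists_adj x |>.2 ⟨v, hxv⟩
      positivity
    rw [Set.indicator_of_mem (by simp [hxv])]
    simp only [muMeasure, hvx, hxv, if_false, if_true, hreg x]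
    field_simp
    ring
  · simp [muMeasure, hvx, hxv]

lemma muMeasure_eq_indicator_add_indicator {d : ℕ}
    (hreg : G.IsRegularOfDegree d) {x y : V} (hxy : G.Adj x y) :
    muMeasure G (1 / (d + 1 : ℝ)) x =
      (↑(insert x (insert y (Dset G x y))) : Set V).indicator (fun _ => 1 / (d + 1 : ℝ)) +
        (↑(Nset G x y) : Set V).indicator fun _ => 1 / (d + 1 : ℝ) := by
  rw [muMeasure_eq_indicator hreg, insert_neighborFinset_eq_union hxy, coe_union,
    Set.indicator_union_of_disjoint (disjoint_coe.2 (disjoint_Nset x y))]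
  rfl

end EdgeNeighborhoods

/-- In an amply regular graph with `α = 1 < β`, for any edge `xy` with `Δ_{xy} = {x₀}`,
`W₁(μ_x^{1/(d+1)}, μ_y^{1/(d+1)}) ≤ (d - 2)/(d + 1)`. -/
theorem stmt4 (G : SimpleGraph V) [DecidableRel G.Adj] {n d a b : ℕ}
    (h : G.IsAmplyRegular n d a b) (ha : a = 1) (hb : 1 < b)
    (x y : V) (hxy : G.Adj x y) (x₀ : V) (hΔ : Dset G x y = {x₀}) :
    W1 G (muMeasure G (1 / (d + 1 : ℝ)) x) (muMeasure G (1 / (d + 1 : ℝ)) y) ≤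
      ((d : ℝ) - 2) / (d + 1) := by
  obtain ⟨-, hreg, hα, hβ⟩ := h
  subst ha
  set p : ℝ := 1 / (d + 1 : ℝ) with hp
  set C := insert x (insert y (Dset G x y))
  have hdiag := isTransportPlan_diagonal (m := (C : Set V).indicator fun _ => p)
    (Set.indicator_nonneg fun _ _ => by positivity)
  have hbip := isTransportPlan_biregular (r := G.Adj) (by omega : b - 1 ≠ 0)
    (by positivity : 0 ≤ p) (fun u hu => card_filter_adj_Nset hα hβ hxy hu)
    (fun v hv => by simpa only [G.adj_comm] using card_filter_adj_Nset hα hβ hxy.symm hv)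
  have hmux := muMeasure_eq_indicator_add_indicator hreg hxy
  have hmuy := muMeasure_eq_indicator_add_indicator hreg hxy.symm
  rw [insert_comm, Dset_comm] at hmuy
  have hplan := hdiag.add hbip
  rw [← hmux, ← hmuy] at hplan
  have hNx : (#(Nset G x y) : ℝ) + 2 = d := by exact_mod_cast card_Nset_add_two hreg hxy hΔ
  calc _ ≤ _ := W1_le_transportCost hplan
    _ = #(Nset G x y) * p := by
      rw [transportCost_add, transportCost_diagonal, zero_add,
        hbip.transportCost_eq_sum_of_adj fun u v huv => by by_contra h; simp [h] at huv]
      simp [Set.indicator_apply]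
    _ = ((d : ℝ) - 2) / (d + 1) := by rw [hp, ← hNx]; ring
end

section
/- Let G be a d-regular graph and xy an edge. Then the Lin-Lu-Yau curvature satisfies κ(x, y) ≤ (2 + |Δ_{xy}|)/d, where Δ_{xy} = Γ(x) ∩ Γ(y) is the set of common neighbors of x and y. -/
open Finset SimpleGraph

variable {V : Type*} [Fintype V] [DecidableEq V]

lemma mu_nonneg (G : SimpleGraph V) [DecidableRel G.Adj] {d : ℕ} (hd : 0 < d) (z v : V) :
    0 ≤ muMeasure G (1 / (d + 1 : ℝ)) z v := by
  have hd1 : (0:ℝ) < d + 1 := by positivity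
  unfold muMeasure
  split_ifs with h1 h2
  · positivity
  · have h1 : (0:ℝ) ≤ 1 - 1 / (d + 1 : ℝ) := by
      rw [sub_nonneg]
      rw [div_le_one hd1]; linarith
    positivity
  · exact le_refl 0

lemma mu_sum (G : SimpleGraph V) [DecidableRel G.Adj] {d : ℕ} (hd : 0 < d) (z : V)
    (hz : G.degree z = d) :
    ∑ v, muMeasure G (1 / (d + 1 : ℝ)) z v = 1 := by
  have hd1 : (0:ℝ) < d + 1 := by positivity
  have hdR : (0:ℝ) < d := by exact_mod_cast hd
  have key : ∀ v, muMeasure G (1 / (d + 1 : ℝ)) z v =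
      (if v = z then (1 / (d + 1 : ℝ)) else 0) +
      (if v ∈ G.neighborFinset z then (1 - 1 / (d + 1 : ℝ)) / (d : ℝ) else 0) := by
    intro v
    unfold muMeasure
    by_cases h1 : v = z
    · subst h1
      simp [G.irrefl]
    · simp only [h1, if_false, SimpleGraph.mem_neighborFinset, hz, zero_add]
  rw [Finset.sum_congr rfl (fun v _ => key v), Finset.sum_add_distrib]
  rw [Finset.sum_ite_eq' Finset.univ z (fun _ => (1 / (d + 1 : ℝ)))]
  rw [Finset.sum_ite_mem, Finset.univ_inter, Finset.sum_const]
  have : (G.neighborFinset z).card = d := by rw [← hz]; exact G.card_neighborFinset_eq_degree z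
  rw [this]
  simp only [Finset.mem_univ, if_true, nsmul_eq_mul]
  field_simp
  ring

lemma mu_adj (G : SimpleGraph V) [DecidableRel G.Adj] {d : ℕ} (hd : 0 < d) {z v : V}
    (hz : G.degree z = d) (h : G.Adj z v) :
    muMeasure G (1 / (d + 1 : ℝ)) z v = 1 / (d + 1 : ℝ) := by
  have hdR : (0:ℝ) < d := by exact_mod_cast hd
  have hne : v ≠ z := (G.ne_of_adj h).symm
  unfold muMeasure
  rw [if_neg hne, if_pos h, hz]
  field_simp
  ring

/-- Upper bound for the Lin-Lu-Yau curvature of an edge of a `d`-regular graph: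
`κ(x,y) ≤ (2 + |Δ_{xy}|)/d`. -/
theorem stmt7 (G : SimpleGraph V) [DecidableRel G.Adj] {d : ℕ}
    (hreg : G.IsRegularOfDegree d) (x y : V) (hxy : G.Adj x y) :
    kappaLLY G d x y ≤ (2 + ((Dset G x y).card : ℝ)) / d := by
  have hd : 0 < d := by
    rcases Nat.eq_zero_or_pos d with h | h
    · exfalso
      have : y ∈ G.neighborFinset x := by rwa [SimpleGraph.mem_neighborFinset]
      have hcard : 0 < (G.neighborFinset x).card := Finset.card_pos.mpr ⟨y, this⟩
      rw [G.card_neighborFinset_eq_degree, hreg x, h] at hcard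
      exact lt_irrefl 0 hcard
    · exact h
  have hdR : (0:ℝ) < d := by exact_mod_cast hd
  have hd1 : (0:ℝ) < d + 1 := by positivity
  set p : ℝ := 1 / (d + 1 : ℝ) with hp
  set μx := muMeasure G p x with hμx
  set μy := muMeasure G p y with hμy
  -- cardinality relation : d = |N| + 1 + |Δ|
  have hcardN : (d : ℝ) = (Nset G x y).card + 1 + (Dset G x y).card := by
    have h1 : (Nset G x y).card + (G.neighborFinset x ∩ insert y (G.neighborFinset y)).card
        = (G.neighborFinset x).card := by
      rw [Nset]
      exact Finset.card_sdiff_add_card_inter _ _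
    have hy : y ∈ G.neighborFinset x := by rwa [SimpleGraph.mem_neighborFinset]
    have h2 : G.neighborFinset x ∩ insert y (G.neighborFinset y)
        = insert y (Dset G x y) := by
      rw [Finset.inter_insert_of_mem hy]; rfl
    have hynot : y ∉ Dset G x y := by
      intro h
      simp only [Dset, Finset.mem_inter, SimpleGraph.mem_neighborFinset] at h
      exact G.irrefl h.2
    rw [h2, Finset.card_insert_of_notMem hynot] at h1
    rw [G.card_neighborFinset_eq_degree, hreg x] at h1
    have : d = (Nset G x y).card + 1 + (Dset G x y).card := by omega
    exact_mod_cast this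
  -- the lower bound for W1
  have hW1 : ((Nset G x y).card : ℝ) / (d + 1) ≤ W1 G μx μy := by
    apply le_csInf
    · -- nonempty: product plan
      refine ⟨∑ u, ∑ v, (G.dist u v : ℝ) * (μx u * μy v), ⟨fun u v => μx u * μy v, ?_, rfl⟩⟩
      refine ⟨fun u v => mul_nonneg (mu_nonneg G hd x u) (mu_nonneg G hd y v), ?_, ?_⟩
      · intro u
        rw [← Finset.mul_sum, mu_sum G hd y (hreg y), mul_one]
      · intro v
        rw [← Finset.sum_mul, mu_sum G hd x (hreg x), one_mul]
    · rintro c ⟨π, ⟨hπ0, hπx, hπy⟩, rfl⟩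
      set f : V → ℝ := fun u => if u ∈ Nset G x y then 1 else 0 with hf
      have step1 : ∑ u, ∑ v, (f u - f v) * π u v ≤ ∑ u, ∑ v, (G.dist u v : ℝ) * π u v := by
        apply Finset.sum_le_sum
        intro u _
        apply Finset.sum_le_sum
        intro v _
        rcases eq_or_lt_of_le (hπ0 u v) with h0 | h0
        · rw [← h0, mul_zero, mul_zero]
        · apply mul_le_mul_of_nonneg_right _ (le_of_lt h0)
          by_cases hle : f u - f v ≤ 0
          · exact hle.trans (Nat.cast_nonneg _)
          · push_neg at hle
            have hfu : f u = 1 := by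
              by_contra h
              have : f u = 0 := by
                simp only [hf] at h ⊢; split_ifs at h ⊢ <;> simp_all
              have hv0 : 0 ≤ f v := by simp only [hf]; split_ifs <;> norm_num
              rw [this] at hle; linarith
            have hfv : f v = 0 := by
              by_contra h
              have : f v = 1 := by
                simp only [hf] at h ⊢; split_ifs at h ⊢ <;> simp_all
              have hu1 : f u ≤ 1 := by simp only [hf]; split_ifs <;> norm_num
              rw [this] at hle; linarith
            rw [hfu, hfv, sub_zero]
            -- need 1 ≤ dist u v ; u ∈ N_x, v ∉ N_x
            have hune : u ≠ v := by
              intro h; rw [h, hfv] at hfu; norm_num at hfu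
            have huN : u ∈ Nset G x y := by
              by_contra h; simp only [hf, if_neg h] at hfu; norm_num at hfu
            have hux : G.Adj x u := by
              have := Finset.mem_sdiff.mp huN
              rw [SimpleGraph.mem_neighborFinset] at this
              exact this.1
            -- v is in the support of μy
            have hμyv : 0 < μy v := by
              have h1 : π u v ≤ μy v := by
                rw [← hπy v]
                exact Finset.single_le_sum (fun i _ => hπ0 i v) (Finset.mem_univ u)
              linarith
            have hvy : v = y ∨ G.Adj y v := by
              by_contra h
              push_neg at h
              simp only [hμy, muMeasure, if_neg h.1, if_neg h.2] at hμyv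
              exact lt_irrefl 0 hμyv
            have hreach : G.Reachable u v := by
              have h1 : G.Reachable u x := hux.symm.reachable
              have h2 : G.Reachable x y := hxy.reachable
              rcases hvy with rfl | hvy
              · exact h1.trans h2
              · exact (h1.trans h2).trans hvy.reachable
            have := hreach.pos_dist_of_ne hune
            exact_mod_cast this
      have step2 : ∑ u, ∑ v, (f u - f v) * π u v = ((Nset G x y).card : ℝ) / (d + 1) := by
        have e1 : ∑ u, ∑ v, (f u - f v) * π u v
            = (∑ u, f u * μx u) - (∑ v, f v * μy v) := by
          simp only [sub_mul, Finset.sum_sub_distrib]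
          congr 1
          · apply Finset.sum_congr rfl
            intro u _
            rw [← Finset.mul_sum, hπx u]
          · rw [Finset.sum_comm]
            apply Finset.sum_congr rfl
            intro v _
            rw [← Finset.mul_sum, hπy v]
        have e2 : ∑ u, f u * μx u = ((Nset G x y).card : ℝ) / (d + 1) := by
          have : ∀ u, f u * μx u = if u ∈ Nset G x y then μx u else 0 := by
            intro u; simp only [hf]; split_ifs <;> ring
          rw [Finset.sum_congr rfl (fun u _ => this u), Finset.sum_ite_mem,
            Finset.univ_inter]
          have hval : ∀ u ∈ Nset G x y, μx u = 1 / (d + 1 : ℝ) := by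
            intro u hu
            have := (Finset.mem_sdiff.mp hu).1
            rw [SimpleGraph.mem_neighborFinset] at this
            exact mu_adj G hd (hreg x) this
          rw [Finset.sum_congr rfl hval, Finset.sum_const, nsmul_eq_mul]
          ring
        have e3 : ∑ v, f v * μy v = 0 := by
          apply Finset.sum_eq_zero
          intro v _
          by_cases hv : v ∈ Nset G x y
          · have h2 := (Finset.mem_sdiff.mp hv).2
            simp only [Finset.mem_insert, SimpleGraph.mem_neighborFinset] at h2
            push_neg at h2
            simp only [hμy, muMeasure, if_neg h2.1, if_neg h2.2, mul_zero]
          · simp only [hf, if_neg hv, zero_mul]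
        rw [e1, e2, e3, sub_zero]
      linarith
  -- finish with algebra
  rw [kappaLLY]
  have hmono : ((d:ℝ) + 1) / d * (1 - W1 G μx μy)
      ≤ ((d:ℝ) + 1) / d * (1 - ((Nset G x y).card : ℝ) / (d + 1)) := by
    apply mul_le_mul_of_nonneg_left _ (by positivity)
    linarith
  refine le_trans hmono (le_of_eq ?_)
  have h2 : (2:ℝ) + ((Dset G x y).card : ℝ) = ((d:ℝ) + 1) - ((Nset G x y).card : ℝ) := by
    linarith
  rw [h2]
  field_simp
end

section
/- Let G be an amply regular graph with parameters (n, d, α, β) with α ≥ 1 and α = β − 1. For any edge xy, construct the bipartite graph H with parts S = N_x ∪ Δ_{xy} and T = N_y ∪ Δ'_{xy} (where Δ'_{xy} is a disjoint copy {z'₁,…,z'_α} of Δ_{xy} = {z₁,…,z_α}), and edges: edges of G between N_x and N_y; an edge v z'_i whenever v ∈ N_x and v z_i ∈ E; an edge z_i w whenever w ∈ N_y and z_i w ∈ E; an edge z_i z'_i for each i; and an edge z_i z'_j whenever i ≠ j and z_i z_j ∈ E. Then for every A ⊆ S, the neighborhood of A in T has cardinality at least |A|, and hence H has a perfect matching.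 -/
/-!
On `S = Γ(x) \ {y}` and `T = Γ(y) \ {x}` the relation `H` is just "`u = w` or `u ~ w`", so the
`H`-neighbours of `u ∈ S` are the vertices of `(Γ(u) ∪ {u}) ∩ Γ(y)` other than `x`. That set has
`α + 1 = β` elements both when `u ~ y` (the `α` common neighbours and `u` itself) and when
`d(u, y) = 2` (the `β` common neighbours), so `H` is `α`-regular on both sides. Double counting
the edges between `A ⊆ S` and its neighbourhood gives Hall's condition, and Hall's theorem
together with `|S| = |T|` (double counting again) gives the perfect matching.
-/

open Finset SimpleGraph

variable {V : Type*} [Fintype V] [DecidableEq V]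

/-- The auxiliary bipartite relation `H` between `N_x ∪ Δ_{xy}` and `N_y ∪ Δ'_{xy}`
(the second `Δ` copy is disjoint from `N_y`, so we model `Δ'_{xy}` by `Δ_{xy}` itself):
edges of `G` between `N_x` and `N_y`; `v z'_i` for `v ∈ N_x` adjacent to `z_i`;
`z_i w` for `w ∈ N_y` adjacent to `z_i`; `z_i z'_i`; and `z_i z'_j` for `i ≠ j` with
`z_i z_j ∈ E`. -/
def Hrel (G : SimpleGraph V) [DecidableRel G.Adj] (x y : V) (u w : V) : Prop :=
  (u ∈ Nset G x y ∧ w ∈ Nset G y x ∧ G.Adj u w) ∨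
  (u ∈ Nset G x y ∧ w ∈ Dset G x y ∧ G.Adj u w) ∨
  (u ∈ Dset G x y ∧ w ∈ Nset G y x ∧ G.Adj u w) ∨
  (u ∈ Dset G x y ∧ w ∈ Dset G x y ∧ (u = w ∨ G.Adj u w))

instance (G : SimpleGraph V) [DecidableRel G.Adj] (x y u w : V) :
    Decidable (Hrel G x y u w) := by
  unfold Hrel; infer_instance

namespace Finset

variable {α β : Type*} {r : α → β → Prop} [∀ a b, Decidable (r a b)]
  {s : Finset α} {t : Finset β} {k : ℕ}

theorem card_le_card_filter_exists_of_biregular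
    (hs : ∀ a ∈ s, #(t.bipartiteAbove r a) = k) (ht : ∀ b ∈ t, #(s.bipartiteBelow r b) = k)
    (hk : 0 < k) {A : Finset α} (hA : A ⊆ s) :
    #A ≤ #(t.filter fun b => ∃ a ∈ A, r a b) := by
  set B := t.filter fun b => ∃ a ∈ A, r a b
  have hAbove : ∀ a ∈ A, k ≤ #(B.bipartiteAbove r a) := fun a ha => by
    refine (hs a (hA ha)).ge.trans (card_le_card fun b hb => ?_)
    simp only [mem_bipartiteAbove, B, mem_filter] at hb ⊢
    exact ⟨⟨hb.1, a, ha, hb.2⟩, hb.2⟩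
  have hBelow : ∀ b ∈ B, #(A.bipartiteBelow r b) ≤ k := fun b hb =>
    (card_le_card (filter_subset_filter _ hA)).trans (ht b (mem_filter.mp hb).1).le
  exact Nat.le_of_mul_le_mul_right (card_mul_le_card_mul r hAbove hBelow) hk

theorem card_eq_card_of_biregular
    (hs : ∀ a ∈ s, #(t.bipartiteAbove r a) = k) (ht : ∀ b ∈ t, #(s.bipartiteBelow r b) = k)
    (hk : 0 < k) : #s = #t :=
  Nat.eq_of_mul_eq_mul_right hk (card_mul_eq_card_mul r hs ht)

theorem exists_bijOn_of_biregular [Nonempty β]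
    (hs : ∀ a ∈ s, #(t.bipartiteAbove r a) = k) (ht : ∀ b ∈ t, #(s.bipartiteBelow r b) = k)
    (hk : 0 < k) : ∃ f : α → β, Set.BijOn f s t ∧ ∀ a ∈ s, r a (f a) := by
  classical
  have hall : ∀ A : Finset s, #A ≤ #(A.biUnion fun a => t.bipartiteAbove r a) := fun A => by
    rw [← card_map (Function.Embedding.subtype _)]
    refine (card_le_card_filter_exists_of_biregular hs ht hk (A := A.map (.subtype _))
      fun a ha => ?_).trans (card_le_card fun b hb => ?_)
    · obtain ⟨a, -, rfl⟩ := mem_map.mp ha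
      exact a.2
    · simp only [mem_filter, mem_map, Function.Embedding.coe_subtype] at hb
      obtain ⟨hb, _, ⟨a, ha, rfl⟩, hab⟩ := hb
      exact mem_biUnion.mpr ⟨a, ha, (mem_bipartiteAbove r).mpr ⟨hb, hab⟩⟩
  obtain ⟨g, hg, hgr⟩ := (all_card_le_biUnion_card_iff_exists_injective _).mp hall
  set f : α → β := fun a => if ha : a ∈ s then g ⟨a, ha⟩ else Classical.arbitrary β
  have hf : ∀ a (ha : a ∈ s), f a = g ⟨a, ha⟩ := fun a ha => dif_pos ha
  have hmaps : Set.MapsTo f s t := fun a ha => by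
    rw [hf a ha]; exact ((mem_bipartiteAbove r).mp (hgr ⟨a, ha⟩)).1
  have hinj : Set.InjOn f s := fun a ha a' ha' h => by
    rw [hf a ha, hf a' ha'] at h; exact congrArg Subtype.val (hg h)
  refine ⟨f, ⟨hmaps, hinj, surjOn_of_injOn_of_card_le f hmaps hinj
    (card_eq_card_of_biregular hs ht hk).ge⟩, fun a ha => ?_⟩
  rw [hf a ha]; exact ((mem_bipartiteAbove r).mp (hgr ⟨a, ha⟩)).2

end Finset

namespace SimpleGraph

variable (G : SimpleGraph V) [DecidableRel G.Adj] {x y v : V}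

lemma Dset_comm (x y : V) : Dset G x y = Dset G y x := inter_comm _ _

lemma Nset_union_Dset (x y : V) : Nset G x y ∪ Dset G x y = (G.neighborFinset x).erase y := by
  ext w
  simp only [Nset, Dset, mem_union, mem_sdiff, mem_insert, mem_inter, mem_neighborFinset,
    mem_erase]
  have : G.Adj y w → w ≠ y := fun h => h.ne.symm
  tauto

lemma Hrel_iff {u w : V} (hu : u ∈ Nset G x y ∪ Dset G x y) (hw : w ∈ Nset G y x ∪ Dset G x y) :
    Hrel G x y u w ↔ u = w ∨ G.Adj u w := by
  simp only [Hrel, Nset, Dset, mem_union, mem_sdiff, mem_insert, mem_inter,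
    mem_neighborFinset] at hu hw ⊢
  grind

variable {n d a : ℕ}

lemma card_insert_inter_neighborFinset (h : G.IsAmplyRegular n d a (a + 1))
    (hvx : G.Adj v x) (hxy : G.Adj x y) (hvy : v ≠ y) :
    #(insert v (G.neighborFinset v) ∩ G.neighborFinset y) = a + 1 := by
  obtain ⟨-, -, hadj, hdist⟩ := h
  by_cases hv : G.Adj v y
  · rw [insert_inter_of_mem (by simpa using hv.symm), card_insert_of_notMem (by simp),
      hadj v y hv]
  · have hvy2 : G.dist v y = 2 := by
      rw [dist, edist_eq_two_iff.mpr ⟨hvy, hv, x, (mem_commonNeighbors _).mpr ⟨hvx, hxy.symm⟩⟩]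
      rfl
    rw [insert_inter_of_notMem (by simpa using fun h => hv h.symm), hdist v y hvy2]

lemma card_filter_eq_or_adj (h : G.IsAmplyRegular n d a (a + 1)) (hxy : G.Adj x y)
    (hv : v ∈ (G.neighborFinset x).erase y) :
    #(((G.neighborFinset y).erase x).filter fun w => v = w ∨ G.Adj v w) = a := by
  have hvx : G.Adj v x := ((mem_neighborFinset _ _ _).mp (mem_of_mem_erase hv)).symm
  have hfilter : ((G.neighborFinset y).erase x).filter (fun w => v = w ∨ G.Adj v w) =
      (insert v (G.neighborFinset v) ∩ G.neighborFinset y).erase x := by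
    ext w
    simp only [mem_filter, mem_erase, mem_inter, mem_insert, mem_neighborFinset]
    grind
  rw [hfilter, card_erase_of_mem (by simp [hvx, hxy.symm]),
    G.card_insert_inter_neighborFinset h hvx hxy (ne_of_mem_erase hv)]
  rfl

lemma card_bipartiteAbove_Hrel (h : G.IsAmplyRegular n d a (a + 1)) (hxy : G.Adj x y) :
    ∀ u ∈ Nset G x y ∪ Dset G x y,
      #((Nset G y x ∪ Dset G x y).bipartiteAbove (Hrel G x y) u) = a := fun u hu => by
  rw [bipartiteAbove, filter_congr fun w hw => G.Hrel_iff hu hw, Dset_comm, Nset_union_Dset]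
  rw [Nset_union_Dset] at hu
  exact G.card_filter_eq_or_adj h hxy hu

lemma card_bipartiteBelow_Hrel (h : G.IsAmplyRegular n d a (a + 1)) (hxy : G.Adj x y) :
    ∀ w ∈ Nset G y x ∪ Dset G x y,
      #((Nset G x y ∪ Dset G x y).bipartiteBelow (Hrel G x y) w) = a := fun w hw => by
  rw [bipartiteBelow,
    filter_congr fun u hu => (G.Hrel_iff hu hw).trans (by rw [eq_comm, G.adj_comm]),
    Nset_union_Dset]
  rw [Dset_comm, Nset_union_Dset] at hw
  exact G.card_filter_eq_or_adj h hxy.symm hw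

end SimpleGraph

/-- In an amply regular graph with `α ≥ 1` and `α = β - 1`, for any edge `xy` the Hall
condition holds for the bipartite graph `H`, and hence `H` has a perfect matching. -/
theorem stmt8 (G : SimpleGraph V) [DecidableRel G.Adj] {n d a b : ℕ}
    (h : G.IsAmplyRegular n d a b) (ha : 1 ≤ a) (hab : a = b - 1)
    (x y : V) (hxy : G.Adj x y) :
    (∀ A ⊆ Nset G x y ∪ Dset G x y,
      A.card ≤ ((Nset G y x ∪ Dset G x y).filter (fun w => ∃ v ∈ A, Hrel G x y v w)).card) ∧
    (∃ f : V → V, Set.BijOn f ↑(Nset G x y ∪ Dset G x y) ↑(Nset G y x ∪ Dset G x y) ∧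
      ∀ v ∈ Nset G x y ∪ Dset G x y, Hrel G x y v (f v)) := by
  obtain rfl : b = a + 1 := by omega
  have hS := G.card_bipartiteAbove_Hrel h hxy
  have hT := G.card_bipartiteBelow_Hrel h hxy
  have : Nonempty V := ⟨x⟩
  exact ⟨fun _ hA => card_le_card_filter_exists_of_biregular hS hT ha hA,
    exists_bijOn_of_biregular hS hT ha⟩
end

section
/- Let G be an amply regular graph with parameters (n, d, α, β) with α = β > 1. Then for every edge xy, the Lin-Lu-Yau curvature satisfies κ(x, y) ≥ 2/d. -/
open Finset SimpleGraph

variable {V : Type*} [Fintype V] [DecidableEq V]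

namespace StmtAux
set_option linter.unusedSectionVars false

variable (G : SimpleGraph V) [DecidableRel G.Adj]

lemma mem_Nset {x y u : V} : u ∈ Nset G x y ↔ G.Adj x u ∧ u ≠ y ∧ ¬ G.Adj y u := by
  simp only [Nset, mem_sdiff, mem_insert, mem_neighborFinset, not_or]

lemma mem_Dset {x y u : V} : u ∈ Dset G x y ↔ G.Adj x u ∧ G.Adj y u := by
  simp [Dset, mem_inter, mem_neighborFinset]

lemma Dset_comm (x y : V) : Dset G y x = Dset G x y := by
  simp [Dset, Finset.inter_comm]

lemma nbr_decomp {x y : V} (hxy : G.Adj x y) :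
    G.neighborFinset y = insert x (Dset G x y ∪ Nset G y x) := by
  ext z
  simp only [mem_neighborFinset, mem_insert, mem_union, mem_Dset, mem_Nset]
  constructor
  · intro hz
    by_cases h1 : z = x
    · exact Or.inl h1
    · by_cases h2 : G.Adj x z
      · exact Or.inr (Or.inl ⟨h2, hz⟩)
      · exact Or.inr (Or.inr ⟨hz, h1, h2⟩)
  · rintro (rfl | ⟨h1, h2⟩ | ⟨h1, h2, h3⟩)
    · exact hxy.symm
    · exact h2
    · exact h1

lemma x_notMem_union {x y : V} : x ∉ Dset G x y ∪ Nset G y x := by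
  simp only [mem_union, mem_Dset, mem_Nset, not_or]
  constructor
  · rintro ⟨h, -⟩; exact G.irrefl h
  · rintro ⟨-, h, -⟩; exact h rfl

lemma disj_D_N {x y : V} : Disjoint (Dset G x y) (Nset G y x) := by
  rw [Finset.disjoint_left]
  intro u hu hu'
  exact ((mem_Nset G).mp hu').2.2 ((mem_Dset G).mp hu).1

lemma count_key {x y u : V} (hxy : G.Adj x y) (hux : G.Adj u x) :
    (G.neighborFinset u ∩ G.neighborFinset y).card
      = 1 + (Dset G x y ∩ G.neighborFinset u).card
        + (Nset G y x ∩ G.neighborFinset u).card := by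
  have hx : x ∈ G.neighborFinset u := by rwa [mem_neighborFinset]
  rw [nbr_decomp G hxy, Finset.inter_comm, Finset.insert_inter_of_mem hx,
    Finset.card_insert_of_notMem, Finset.union_inter_distrib_right,
    Finset.card_union_of_disjoint ((disj_D_N G).mono inter_subset_left inter_subset_left)]
  · omega
  · intro hmem
    exact x_notMem_union G (Finset.mem_of_mem_inter_left hmem)

lemma dist_eq_two {u z v : V} (h1 : G.Adj u z) (h2 : G.Adj z v)
    (hne : u ≠ v) (hna : ¬ G.Adj u v) : G.dist u v = 2 := by
  have h3 : G.dist u v ≤ 2 := by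
    simpa using SimpleGraph.dist_le (Walk.cons h1 (Walk.cons h2 Walk.nil))
  have h0 : G.dist u v ≠ 0 := by
    intro hc
    rcases SimpleGraph.dist_eq_zero_iff_eq_or_not_reachable.mp hc with h | h
    · exact hne h
    · exact h ⟨Walk.cons h1 (Walk.cons h2 Walk.nil)⟩
  have h1' : G.dist u v ≠ 1 := by
    rw [Ne, SimpleGraph.dist_eq_one_iff_adj]; exact hna
  omega

lemma filter_adj_l (s : Finset V) (u : V) :
    s.filter (fun v => G.Adj u v) = s ∩ G.neighborFinset u := by
  ext z; simp [mem_filter, mem_inter, mem_neighborFinset]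

lemma filter_adj_r (s : Finset V) (w : V) :
    s.filter (fun v => G.Adj v w) = s ∩ G.neighborFinset w := by
  ext z; simp [mem_filter, mem_inter, mem_neighborFinset, G.adj_comm]

lemma sum_adj_real (s : Finset V) (u : V) :
    ∑ v ∈ s, (if G.Adj u v then (1:ℝ) else 0) = ((s ∩ G.neighborFinset u).card : ℝ) := by
  rw [Finset.sum_boole, filter_adj_l]

lemma sum_adj_real' (s : Finset V) (w : V) :
    ∑ v ∈ s, (if G.Adj v w then (1:ℝ) else 0) = ((s ∩ G.neighborFinset w).card : ℝ) := by
  rw [Finset.sum_boole, filter_adj_r]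

lemma card_inter_eq_sum (s : Finset V) (u : V) :
    (s ∩ G.neighborFinset u).card = ∑ w ∈ s, if G.Adj u w then 1 else 0 := by
  rw [← filter_adj_l, Finset.card_filter]

lemma double_count (s t : Finset V) :
    ∑ u ∈ s, (t ∩ G.neighborFinset u).card = ∑ w ∈ t, (s ∩ G.neighborFinset w).card := by
  simp only [card_inter_eq_sum]
  rw [Finset.sum_comm]
  apply Finset.sum_congr rfl
  intro w _
  apply Finset.sum_congr rfl
  intro u _
  simp [G.adj_comm]

variable {G}
variable {x y : V} {a : ℕ} (hxy : G.Adj x y)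
variable (hα : ∀ x y, G.Adj x y → (G.neighborFinset x ∩ G.neighborFinset y).card = a)
variable (hβ : ∀ x y, G.dist x y = 2 → (G.neighborFinset x ∩ G.neighborFinset y).card = a)

include hxy hβ in
lemma key_row {u : V} (hu : u ∈ Nset G x y) :
    1 + (Dset G x y ∩ G.neighborFinset u).card
      + (Nset G y x ∩ G.neighborFinset u).card = a := by
  obtain ⟨hxu, huy, hyu⟩ := (mem_Nset G).mp hu
  have hd : G.dist u y = 2 :=
    dist_eq_two G hxu.symm hxy huy (fun h => hyu h.symm)
  rw [← count_key G hxy hxu.symm]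
  exact hβ u y hd

include hxy hβ in
lemma key_col {v : V} (hv : v ∈ Nset G y x) :
    1 + (Dset G x y ∩ G.neighborFinset v).card
      + (Nset G x y ∩ G.neighborFinset v).card = a := by
  obtain ⟨hyv, hvx, hxv⟩ := (mem_Nset G).mp hv
  have hd : G.dist v x = 2 :=
    dist_eq_two G hyv.symm hxy.symm hvx (fun h => hxv h.symm)
  rw [← Dset_comm, ← count_key G hxy.symm hyv.symm]
  exact hβ v x hd

include hxy hα in
lemma key_D_x {w : V} (hw : w ∈ Dset G x y) :
    1 + (Dset G x y ∩ G.neighborFinset w).card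
      + (Nset G x y ∩ G.neighborFinset w).card = a := by
  obtain ⟨hxw, hyw⟩ := (mem_Dset G).mp hw
  rw [← Dset_comm, ← count_key G hxy.symm hyw.symm]
  exact hα w x hxw.symm

include hxy hα in
lemma key_D_y {w : V} (hw : w ∈ Dset G x y) :
    1 + (Dset G x y ∩ G.neighborFinset w).card
      + (Nset G y x ∩ G.neighborFinset w).card = a := by
  obtain ⟨hxw, hyw⟩ := (mem_Dset G).mp hw
  rw [← count_key G hxy hxw.symm]
  exact hα w y hyw.symm

include hxy hα in
lemma k_eq {w : V} (hw : w ∈ Dset G x y) :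
    (Nset G x y ∩ G.neighborFinset w).card = (Nset G y x ∩ G.neighborFinset w).card := by
  have h1 := key_D_x hxy hα hw
  have h2 := key_D_y hxy hα hw
  omega

include hxy hα in
lemma card_Dset : (Dset G x y).card = a := hα x y hxy

include hxy hα in
lemma card_deg_decomp {d : ℕ} (hd : G.degree x = d) :
    d = 1 + a + (Nset G x y).card := by
  have hdec : G.neighborFinset x = insert y (Dset G y x ∪ Nset G x y) :=
    nbr_decomp G hxy.symm
  rw [← hd, ← SimpleGraph.card_neighborFinset_eq_degree, hdec,
    Finset.card_insert_of_notMem (x_notMem_union G),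
    Finset.card_union_of_disjoint (disj_D_N G), Dset_comm, card_Dset hxy hα]
  omega

end StmtAux

/-- In an amply regular graph with `α = β > 1`, every edge has Lin-Lu-Yau curvature at
least `2/d`. -/
theorem stmt10 (G : SimpleGraph V) [DecidableRel G.Adj] {n d a b : ℕ}
    (h : G.IsAmplyRegular n d a b) (hab : a = b) (hb : 1 < b)
    (x y : V) (hxy : G.Adj x y) :
    (2 : ℝ) / d ≤ kappaLLY G d x y := by
  classical
  subst hab
  obtain ⟨-, hreg, hα, hβ⟩ := h
  have ha : 2 ≤ a := hb
  have hmx : d = 1 + a + (Nset G x y).card := StmtAux.card_deg_decomp hxy hα (hreg x)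
  have hd3 : 3 ≤ d := by omega
  have hdR : (3:ℝ) ≤ (d:ℝ) := by exact_mod_cast hd3
  have hd0 : (0:ℝ) < (d:ℝ) := by linarith
  have haR : (1:ℝ) ≤ (a:ℝ) - 1 := by
    have : (2:ℝ) ≤ (a:ℝ) := by exact_mod_cast ha
    linarith
  have haR0 : ((a:ℝ) - 1) ≠ 0 := by linarith
  set q : ℝ := 1/((d:ℝ)+1) with hqdef
  have hq0 : 0 < q := by rw [hqdef]; positivity
  let k : V → ℕ := fun w => (Nset G x y ∩ G.neighborFinset w).card
  have hkdef : ∀ w, k w = (Nset G x y ∩ G.neighborFinset w).card := fun _ => rfl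
  let S : V → V → ℝ := fun u v =>
    ∑ w ∈ Dset G x y, if G.Adj u w ∧ G.Adj v w then 1/((k w : ℝ)) else 0
  have hSdef : ∀ u v, S u v
      = ∑ w ∈ Dset G x y, if G.Adj u w ∧ G.Adj v w then 1/((k w : ℝ)) else 0 :=
    fun _ _ => rfl
  let π : V → V → ℝ := fun u v =>
    (if u = v ∧ (u = x ∨ u = y ∨ u ∈ Dset G x y) then q else 0) +
    (if u ∈ Nset G x y ∧ v ∈ Nset G y x then
      q/((a:ℝ)-1) * ((if G.Adj u v then (1:ℝ) else 0) + S u v) else 0)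
  have hπdef : ∀ u v, π u v =
      (if u = v ∧ (u = x ∨ u = y ∨ u ∈ Dset G x y) then q else 0) +
      (if u ∈ Nset G x y ∧ v ∈ Nset G y x then
        q/((a:ℝ)-1) * ((if G.Adj u v then (1:ℝ) else 0) + S u v) else 0) :=
    fun _ _ => rfl
  have hS_nonneg : ∀ u v, 0 ≤ S u v := by
    intro u v
    rw [hSdef]
    apply Finset.sum_nonneg
    intro w _
    split_ifs <;> positivity
  have hπ_nonneg : ∀ u v, 0 ≤ π u v := by
    intro u v
    rw [hπdef]
    apply add_nonneg
    · split_ifs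
      exacts [le_of_lt hq0, le_rfl]
    · by_cases hcc : u ∈ Nset G x y ∧ v ∈ Nset G y x
      · rw [if_pos hcc]
        refine mul_nonneg (by positivity) (add_nonneg ?_ (hS_nonneg u v))
        by_cases hadj : G.Adj u v <;> simp [hadj]
      · rw [if_neg hcc]
  -- inner sums over rows
  have hSrow : ∀ u ∈ Nset G x y, ∑ v ∈ Nset G y x, S u v
      = ((Dset G x y ∩ G.neighborFinset u).card : ℝ) := by
    intro u hu
    simp only [hSdef]
    rw [Finset.sum_comm]
    have hterm : ∀ w ∈ Dset G x y,
        (∑ v ∈ Nset G y x, if G.Adj u w ∧ G.Adj v w then 1/((k w:ℝ)) else 0)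
          = if G.Adj u w then (1:ℝ) else 0 := by
      intro w hw
      by_cases huw : G.Adj u w
      · simp only [huw, true_and, if_pos]
        have hcongr : ∀ v ∈ Nset G y x, (if G.Adj v w then 1/((k w:ℝ)) else 0)
            = (1/((k w:ℝ))) * (if G.Adj v w then (1:ℝ) else 0) := by
          intro v _; split_ifs <;> ring
        rw [Finset.sum_congr rfl hcongr, ← Finset.mul_sum, StmtAux.sum_adj_real' G,
          ← StmtAux.k_eq hxy hα hw, ← hkdef]
        have hkpos : k w ≠ 0 := by
          rw [hkdef]
          apply Finset.card_ne_zero_of_mem (a := u)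
          exact Finset.mem_inter.mpr ⟨hu, (mem_neighborFinset _ _ _).mpr huw.symm⟩
        have : ((k w : ℝ)) ≠ 0 := Nat.cast_ne_zero.mpr hkpos
        field_simp
      · simp [huw]
    rw [Finset.sum_congr rfl hterm, StmtAux.sum_adj_real G]
  have hScol : ∀ v ∈ Nset G y x, ∑ u ∈ Nset G x y, S u v
      = ((Dset G x y ∩ G.neighborFinset v).card : ℝ) := by
    intro v hv
    simp only [hSdef]
    rw [Finset.sum_comm]
    have hterm : ∀ w ∈ Dset G x y,
        (∑ u ∈ Nset G x y, if G.Adj u w ∧ G.Adj v w then 1/((k w:ℝ)) else 0)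
          = if G.Adj v w then (1:ℝ) else 0 := by
      intro w hw
      by_cases hvw : G.Adj v w
      · simp only [hvw, and_true, if_pos]
        have hcongr : ∀ u ∈ Nset G x y, (if G.Adj u w then 1/((k w:ℝ)) else 0)
            = (1/((k w:ℝ))) * (if G.Adj u w then (1:ℝ) else 0) := by
          intro u _; split_ifs <;> ring
        rw [Finset.sum_congr rfl hcongr, ← Finset.mul_sum, StmtAux.sum_adj_real' G,
          ← hkdef]
        have hkpos : k w ≠ 0 := by
          rw [hkdef, StmtAux.k_eq hxy hα hw]
          apply Finset.card_ne_zero_of_mem (a := v)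
          exact Finset.mem_inter.mpr ⟨hv, (mem_neighborFinset _ _ _).mpr hvw.symm⟩
        have : ((k w : ℝ)) ≠ 0 := Nat.cast_ne_zero.mpr hkpos
        field_simp
      · simp [hvw]
    rw [Finset.sum_congr rfl hterm, StmtAux.sum_adj_real G]
  -- row sums
  have hrow : ∀ u, ∑ v, π u v = muMeasure G (1/((d:ℝ)+1)) x u := by
    intro u
    have hsplit : ∑ v, π u v
        = (if (u = x ∨ u = y ∨ u ∈ Dset G x y) then q else 0)
          + (if u ∈ Nset G x y then q else 0) := by
      simp only [hπdef]
      rw [Finset.sum_add_distrib]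
      congr 1
      · by_cases hP : (u = x ∨ u = y ∨ u ∈ Dset G x y)
        · simp [hP]
        · simp [hP]
      · by_cases hu : u ∈ Nset G x y
        · simp only [hu, true_and, if_true]
          have hmemsum : ∑ v, (if v ∈ Nset G y x then
              q/((a:ℝ)-1) * ((if G.Adj u v then (1:ℝ) else 0) + S u v) else 0)
              = ∑ v ∈ Nset G y x,
                q/((a:ℝ)-1) * ((if G.Adj u v then (1:ℝ) else 0) + S u v) := by
            simp
          rw [hmemsum, ← Finset.mul_sum, Finset.sum_add_distrib,
            StmtAux.sum_adj_real G, hSrow u hu]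
          have hkey := StmtAux.key_row hxy hβ hu
          have hcast : ((Nset G y x ∩ G.neighborFinset u).card : ℝ)
              + ((Dset G x y ∩ G.neighborFinset u).card : ℝ) = (a:ℝ) - 1 := by
            have h1 : (1:ℝ) + ((Dset G x y ∩ G.neighborFinset u).card : ℝ)
                + ((Nset G y x ∩ G.neighborFinset u).card : ℝ) = (a:ℝ) := by
              exact_mod_cast hkey
            linarith
          rw [hcast, div_mul_cancel₀ _ haR0]
        · simp [hu]
    rw [hsplit]
    show _ = if u = x then 1/((d:ℝ)+1) else
      if G.Adj x u then (1 - 1/((d:ℝ)+1)) / (G.degree x : ℝ) else 0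
    have hmuval : (1 - 1/((d:ℝ)+1)) / (G.degree x : ℝ) = q := by
      rw [hreg x, hqdef]
      field_simp
      ring
    by_cases hux : u = x
    · have hnx : u ∉ Nset G x y := by
        intro hm
        have hh := ((StmtAux.mem_Nset G).mp hm).1
        rw [hux] at hh
        exact G.irrefl hh
      have h1 : (u = x ∨ u = y ∨ u ∈ Dset G x y) := Or.inl hux
      rw [if_pos hux]
      simp [h1, hnx, hqdef]
    · rw [if_neg hux]
      by_cases hadj : G.Adj x u
      · rw [if_pos hadj, hmuval]
        by_cases huy : u = y
        · have h1 : (u = x ∨ u = y ∨ u ∈ Dset G x y) := Or.inr (Or.inl huy)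
          have h2 : u ∉ Nset G x y := fun hm => ((StmtAux.mem_Nset G).mp hm).2.1 huy
          simp [h1, h2]
        · by_cases hyu : G.Adj y u
          · have h1 : (u = x ∨ u = y ∨ u ∈ Dset G x y) :=
              Or.inr (Or.inr ((StmtAux.mem_Dset G).mpr ⟨hadj, hyu⟩))
            have h2 : u ∉ Nset G x y := fun hm => ((StmtAux.mem_Nset G).mp hm).2.2 hyu
            simp [h1, h2]
          · have h1 : u ∈ Nset G x y := (StmtAux.mem_Nset G).mpr ⟨hadj, huy, hyu⟩
            have h2 : ¬(u = x ∨ u = y ∨ u ∈ Dset G x y) := by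
              rintro (hh|hh|hh)
              exacts [hux hh, huy hh, hyu ((StmtAux.mem_Dset G).mp hh).2]
            simp [h1, h2]
      · rw [if_neg hadj]
        have h2 : ¬(u = x ∨ u = y ∨ u ∈ Dset G x y) := by
          rintro (hh|hh|hh)
          · exact hux hh
          · exact hadj (hh ▸ hxy)
          · exact hadj ((StmtAux.mem_Dset G).mp hh).1
        have h3 : u ∉ Nset G x y := fun hm => hadj ((StmtAux.mem_Nset G).mp hm).1
        simp [h2, h3]
  -- column sums
  have hcol : ∀ v, ∑ u, π u v = muMeasure G (1/((d:ℝ)+1)) y v := by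
    intro v
    have hsplit : ∑ u, π u v
        = (if (v = x ∨ v = y ∨ v ∈ Dset G x y) then q else 0)
          + (if v ∈ Nset G y x then q else 0) := by
      simp only [hπdef]
      rw [Finset.sum_add_distrib]
      congr 1
      · have hcongr : ∀ u : V, (if u = v ∧ (u = x ∨ u = y ∨ u ∈ Dset G x y) then q else 0)
            = (if u = v then (if (v = x ∨ v = y ∨ v ∈ Dset G x y) then q else 0) else 0) := by
          intro u
          by_cases huv : u = v
          · subst huv; simp
          · simp [huv]
        rw [Finset.sum_congr rfl (fun u _ => hcongr u)]
        simp
      · by_cases hv : v ∈ Nset G y x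
        · simp only [hv, and_true, if_true]
          have hmemsum : ∑ u, (if u ∈ Nset G x y then
              q/((a:ℝ)-1) * ((if G.Adj u v then (1:ℝ) else 0) + S u v) else 0)
              = ∑ u ∈ Nset G x y,
                q/((a:ℝ)-1) * ((if G.Adj u v then (1:ℝ) else 0) + S u v) := by
            simp
          rw [hmemsum, ← Finset.mul_sum, Finset.sum_add_distrib,
            StmtAux.sum_adj_real' G, hScol v hv]
          have hkey := StmtAux.key_col hxy hβ hv
          have hcast : ((Nset G x y ∩ G.neighborFinset v).card : ℝ)
              + ((Dset G x y ∩ G.neighborFinset v).card : ℝ) = (a:ℝ) - 1 := by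
            have h1 : (1:ℝ) + ((Dset G x y ∩ G.neighborFinset v).card : ℝ)
                + ((Nset G x y ∩ G.neighborFinset v).card : ℝ) = (a:ℝ) := by
              exact_mod_cast hkey
            linarith
          rw [hcast, div_mul_cancel₀ _ haR0]
        · simp [hv]
    rw [hsplit]
    show _ = if v = y then 1/((d:ℝ)+1) else
      if G.Adj y v then (1 - 1/((d:ℝ)+1)) / (G.degree y : ℝ) else 0
    have hmuval : (1 - 1/((d:ℝ)+1)) / (G.degree y : ℝ) = q := by
      rw [hreg y, hqdef]
      field_simp
      ring
    by_cases hvy : v = y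
    · have hny : v ∉ Nset G y x := by
        intro hm
        have hh := ((StmtAux.mem_Nset G).mp hm).1
        rw [hvy] at hh
        exact G.irrefl hh
      have h1 : (v = x ∨ v = y ∨ v ∈ Dset G x y) := Or.inr (Or.inl hvy)
      rw [if_pos hvy]
      simp [h1, hny, hqdef]
    · rw [if_neg hvy]
      by_cases hadj : G.Adj y v
      · rw [if_pos hadj, hmuval]
        by_cases hvx : v = x
        · have h1 : (v = x ∨ v = y ∨ v ∈ Dset G x y) := Or.inl hvx
          have h2 : v ∉ Nset G y x := fun hm => ((StmtAux.mem_Nset G).mp hm).2.1 hvx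
          simp [h1, h2]
        · by_cases hxv : G.Adj x v
          · have h1 : (v = x ∨ v = y ∨ v ∈ Dset G x y) :=
              Or.inr (Or.inr ((StmtAux.mem_Dset G).mpr ⟨hxv, hadj⟩))
            have h2 : v ∉ Nset G y x := fun hm => ((StmtAux.mem_Nset G).mp hm).2.2 hxv
            simp [h1, h2]
          · have h1 : v ∈ Nset G y x := (StmtAux.mem_Nset G).mpr ⟨hadj, hvx, hxv⟩
            have h2 : ¬(v = x ∨ v = y ∨ v ∈ Dset G x y) := by
              rintro (hh|hh|hh)
              exacts [hvx hh, hvy hh, hxv ((StmtAux.mem_Dset G).mp hh).1]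
            simp [h1, h2]
      · rw [if_neg hadj]
        have h2 : ¬(v = x ∨ v = y ∨ v ∈ Dset G x y) := by
          rintro (hh|hh|hh)
          · exact hadj (hh ▸ hxy.symm)
          · exact hvy hh
          · exact hadj ((StmtAux.mem_Dset G).mp hh).2
        have h3 : v ∉ Nset G y x := fun hm => hadj ((StmtAux.mem_Nset G).mp hm).1
        simp [h2, h3]
  -- cost bound
  have hcost : ∑ u, ∑ v, (G.dist u v : ℝ) * π u v ≤ ((d:ℝ)-1) * q := by
    have hB : ∀ u v, (G.dist u v : ℝ) * π u v ≤
        (if u ∈ Nset G x y ∧ v ∈ Nset G y x then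
          q/((a:ℝ)-1) * ((if G.Adj u v then (1:ℝ) else 0) + 2 * S u v) else 0) := by
      intro u v
      rw [hπdef, mul_add]
      have hdiag : (G.dist u v : ℝ)
          * (if u = v ∧ (u = x ∨ u = y ∨ u ∈ Dset G x y) then q else 0) = 0 := by
        by_cases huv : u = v
        · subst huv; simp [SimpleGraph.dist_self]
        · simp [huv]
      rw [hdiag, zero_add]
      by_cases hc : u ∈ Nset G x y ∧ v ∈ Nset G y x
      · rw [if_pos hc, if_pos hc, mul_left_comm]
        apply mul_le_mul_of_nonneg_left _ (by positivity : (0:ℝ) ≤ q/((a:ℝ)-1))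
        rw [mul_add]
        apply add_le_add
        · by_cases hadj : G.Adj u v
          · rw [if_pos hadj, mul_one]
            have hle : G.dist u v ≤ 1 := by
              simpa using SimpleGraph.dist_le (Walk.cons hadj Walk.nil)
            exact_mod_cast hle
          · simp [hadj]
        · rw [hSdef, Finset.mul_sum, Finset.mul_sum]
          apply Finset.sum_le_sum
          intro w _
          by_cases hcond : G.Adj u w ∧ G.Adj v w
          · rw [if_pos hcond]
            have hd2 : G.dist u v ≤ 2 := by
              simpa using SimpleGraph.dist_le (Walk.cons hcond.1 (Walk.cons hcond.2.symm Walk.nil))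
            have hd2' : (G.dist u v : ℝ) ≤ 2 := by exact_mod_cast hd2
            exact mul_le_mul_of_nonneg_right hd2' (by positivity)
          · simp [hcond]
      · rw [if_neg hc, if_neg hc, mul_zero]
    have hstep1 : ∑ u, ∑ v, (G.dist u v : ℝ) * π u v ≤
        ∑ u, ∑ v, (if u ∈ Nset G x y ∧ v ∈ Nset G y x then
          q/((a:ℝ)-1) * ((if G.Adj u v then (1:ℝ) else 0) + 2 * S u v) else 0) :=
      Finset.sum_le_sum fun u _ => Finset.sum_le_sum fun v _ => hB u v
    have hstep2 : ∑ u, ∑ v, (if u ∈ Nset G x y ∧ v ∈ Nset G y x then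
          q/((a:ℝ)-1) * ((if G.Adj u v then (1:ℝ) else 0) + 2 * S u v) else 0)
        = q/((a:ℝ)-1) * ∑ u ∈ Nset G x y,
            (((Nset G y x ∩ G.neighborFinset u).card : ℝ)
              + 2 * ((Dset G x y ∩ G.neighborFinset u).card : ℝ)) := by
      have h1 : ∀ u : V, ∑ v, (if u ∈ Nset G x y ∧ v ∈ Nset G y x then
            q/((a:ℝ)-1) * ((if G.Adj u v then (1:ℝ) else 0) + 2 * S u v) else 0)
          = (if u ∈ Nset G x y then ∑ v ∈ Nset G y x,
              q/((a:ℝ)-1) * ((if G.Adj u v then (1:ℝ) else 0) + 2 * S u v) else 0) := by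
        intro u
        by_cases hu : u ∈ Nset G x y
        · simp [hu]
        · simp [hu]
      rw [Finset.sum_congr rfl (fun u _ => h1 u)]
      have h2 : ∑ u, (if u ∈ Nset G x y then ∑ v ∈ Nset G y x,
            q/((a:ℝ)-1) * ((if G.Adj u v then (1:ℝ) else 0) + 2 * S u v) else 0)
          = ∑ u ∈ Nset G x y, ∑ v ∈ Nset G y x,
              q/((a:ℝ)-1) * ((if G.Adj u v then (1:ℝ) else 0) + 2 * S u v) := by
        simp
      rw [h2, Finset.mul_sum]
      apply Finset.sum_congr rfl
      intro u hu
      rw [← Finset.mul_sum, Finset.sum_add_distrib, StmtAux.sum_adj_real G,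
        ← Finset.mul_sum, hSrow u hu]
    have hnat : ∑ u ∈ Nset G x y, ((Nset G y x ∩ G.neighborFinset u).card
          + 2 * (Dset G x y ∩ G.neighborFinset u).card) ≤ (d-1) * (a-1) := by
      have hsplitn : ∑ u ∈ Nset G x y, ((Nset G y x ∩ G.neighborFinset u).card
            + 2 * (Dset G x y ∩ G.neighborFinset u).card)
          = (∑ u ∈ Nset G x y, ((Nset G y x ∩ G.neighborFinset u).card
              + (Dset G x y ∩ G.neighborFinset u).card))
            + ∑ u ∈ Nset G x y, (Dset G x y ∩ G.neighborFinset u).card := by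
        rw [← Finset.sum_add_distrib]
        apply Finset.sum_congr rfl
        intro u _
        omega
      have hsum1 : ∑ u ∈ Nset G x y, ((Nset G y x ∩ G.neighborFinset u).card
            + (Dset G x y ∩ G.neighborFinset u).card)
          = (Nset G x y).card * (a - 1) := by
        rw [Finset.sum_congr rfl (fun u hu => ?_), Finset.sum_const, smul_eq_mul]
        have := StmtAux.key_row hxy hβ hu
        omega
      have hsum2 : ∑ u ∈ Nset G x y, (Dset G x y ∩ G.neighborFinset u).card
          ≤ a * (a - 1) := by
        rw [StmtAux.double_count G]
        calc ∑ w ∈ Dset G x y, (Nset G x y ∩ G.neighborFinset w).card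
            ≤ ∑ w ∈ Dset G x y, (a - 1) := by
              apply Finset.sum_le_sum
              intro w hw
              have := StmtAux.key_D_x hxy hα hw
              omega
          _ = a * (a - 1) := by
              rw [Finset.sum_const, smul_eq_mul, StmtAux.card_Dset hxy hα]
      calc ∑ u ∈ Nset G x y, ((Nset G y x ∩ G.neighborFinset u).card
            + 2 * (Dset G x y ∩ G.neighborFinset u).card)
          ≤ (Nset G x y).card * (a - 1) + a * (a - 1) := by
            rw [hsplitn, hsum1]
            omega
        _ = ((Nset G x y).card + a) * (a - 1) := by ring
        _ = (d - 1) * (a - 1) := by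
            congr 1
            omega
    have hnatR : ∑ u ∈ Nset G x y,
        (((Nset G y x ∩ G.neighborFinset u).card : ℝ)
          + 2 * ((Dset G x y ∩ G.neighborFinset u).card : ℝ))
        ≤ ((d:ℝ)-1) * ((a:ℝ)-1) := by
      have hcast : (((d-1) * (a-1) : ℕ) : ℝ) = ((d:ℝ)-1) * ((a:ℝ)-1) := by
        have : (1:ℕ) ≤ d := by omega
        have : (1:ℕ) ≤ a := by omega
        push_cast [Nat.cast_sub ‹(1:ℕ) ≤ d›]
        rw [Nat.cast_sub (by omega : (1:ℕ) ≤ a)]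
        push_cast
        ring
      calc ∑ u ∈ Nset G x y,
          (((Nset G y x ∩ G.neighborFinset u).card : ℝ)
            + 2 * ((Dset G x y ∩ G.neighborFinset u).card : ℝ))
          = ((∑ u ∈ Nset G x y, ((Nset G y x ∩ G.neighborFinset u).card
              + 2 * (Dset G x y ∩ G.neighborFinset u).card) : ℕ) : ℝ) := by
            push_cast
            rfl
        _ ≤ (((d-1) * (a-1) : ℕ) : ℝ) := by exact_mod_cast hnat
        _ = ((d:ℝ)-1) * ((a:ℝ)-1) := hcast
    calc ∑ u, ∑ v, (G.dist u v : ℝ) * π u v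
        ≤ q/((a:ℝ)-1) * ∑ u ∈ Nset G x y,
            (((Nset G y x ∩ G.neighborFinset u).card : ℝ)
              + 2 * ((Dset G x y ∩ G.neighborFinset u).card : ℝ)) := by
          rw [← hstep2]
          exact hstep1
      _ ≤ q/((a:ℝ)-1) * (((d:ℝ)-1) * ((a:ℝ)-1)) :=
          mul_le_mul_of_nonneg_left hnatR (by positivity)
      _ = ((d:ℝ)-1) * q := by
          field_simp
  -- assemble
  have hplan : IsTransportPlan (muMeasure G (1/((d:ℝ)+1)) x)
      (muMeasure G (1/((d:ℝ)+1)) y) π := ⟨hπ_nonneg, hrow, hcol⟩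
  have hbdd : BddBelow {c : ℝ | ∃ pi, IsTransportPlan (muMeasure G (1/((d:ℝ)+1)) x)
      (muMeasure G (1/((d:ℝ)+1)) y) pi ∧ c = ∑ u, ∑ v, (G.dist u v : ℝ) * pi u v} := by
    refine ⟨0, fun c hc => ?_⟩
    obtain ⟨pi, hpi, rfl⟩ := hc
    apply Finset.sum_nonneg
    intro u _
    apply Finset.sum_nonneg
    intro v _
    exact mul_nonneg (by positivity) (hpi.1 u v)
  have hmem : (∑ u, ∑ v, (G.dist u v : ℝ) * π u v) ∈ {c : ℝ | ∃ pi,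
      IsTransportPlan (muMeasure G (1/((d:ℝ)+1)) x)
        (muMeasure G (1/((d:ℝ)+1)) y) pi ∧
      c = ∑ u, ∑ v, (G.dist u v : ℝ) * pi u v} := ⟨π, hplan, rfl⟩
  have hW1 : W1 G (muMeasure G (1/((d:ℝ)+1)) x) (muMeasure G (1/((d:ℝ)+1)) y)
      ≤ ((d:ℝ)-1) * q := le_trans (csInf_le hbdd hmem) hcost
  have hq1 : ((d:ℝ)-1) * q = ((d:ℝ)-1)/((d:ℝ)+1) := by
    rw [hqdef]; ring
  have hdd1 : (0:ℝ) < (d:ℝ) + 1 := by linarith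
  have hkey2 : 2/((d:ℝ)+1) ≤ 1 - W1 G (muMeasure G (1/((d:ℝ)+1)) x)
      (muMeasure G (1/((d:ℝ)+1)) y) := by
    rw [hq1] at hW1
    have hsum : ((d:ℝ)-1)/((d:ℝ)+1) + 2/((d:ℝ)+1) = 1 := by
      field_simp
      ring
    linarith
  show (2:ℝ)/d ≤ ((d:ℝ) + 1) / d * (1 - W1 G (muMeasure G (1/((d:ℝ)+1)) x)
    (muMeasure G (1/((d:ℝ)+1)) y))
  calc (2:ℝ)/d = ((d:ℝ)+1)/d * (2/((d:ℝ)+1)) := by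
        rw [div_mul_div_comm]
        rw [mul_comm (d:ℝ) ((d:ℝ)+1)]
        rw [mul_div_mul_left _ _ (by linarith : ((d:ℝ)+1) ≠ 0)]
      _ ≤ ((d:ℝ)+1)/d * (1 - W1 G (muMeasure G (1/((d:ℝ)+1)) x)
          (muMeasure G (1/((d:ℝ)+1)) y)) :=
        mul_le_mul_of_nonneg_left hkey2 (by positivity)
end

section
/- Let G be a connected locally finite graph such that κ(x,y) ≥ k > 0 for every edge xy, where κ denotes the Lin-Lu-Yau curvature. Then diam(G) ≤ 2/k. -/
open Finset SimpleGraph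

variable {V : Type*} [Fintype V] [DecidableEq V]

/-- `κ_p(x,y) = 1 - W₁(μ_x^p, μ_y^p)/d(x,y)`. -/
noncomputable def kappaP (G : SimpleGraph V) [DecidableRel G.Adj] (p : ℝ) (x y : V) :
    ℝ :=
  1 - W1 G (muMeasure G p x) (muMeasure G p y) / (G.dist x y : ℝ)

open Filter Topology

/-! Fix `c < k` and `p < 1` so close to `1` that `W₁(μ_a^p, μ_b^p) ≤ 1 - c(1-p)` on every edge
(finitely many edges). Since `d(·, y)` is 1-Lipschitz, the easy half of Kantorovich–Rubinstein
duality makes `F z = Σ_v d(v, y) μ_z^p(v)` change by at most `1 - c(1-p)` along each edge. Along a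
geodesic from `x` to `y`, `F` falls from at least `d(x,y) - (1-p)` to exactly `1-p`, so
`d(x,y) - 2(1-p) ≤ d(x,y)(1 - c(1-p))`, i.e. `d(x,y) c ≤ 2`. Letting `c → k` gives `d(x,y) k ≤ 2`. -/

theorem SimpleGraph.Walk.sub_le_length_mul {α : Type*} {G : SimpleGraph α} (F : α → ℝ) {B : ℝ}
    (hB : ∀ a b, G.Adj a b → F a - F b ≤ B) {x y : α} (w : G.Walk x y) :
    F x - F y ≤ w.length * B := by
  induction w with
  | nil => simp
  | cons hadj _ ih =>
    rw [Walk.length_cons, Nat.cast_succ]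
    linarith [hB _ _ hadj]

theorem eventually_forall_lt_of_tendsto {α ι : Type*} [Finite ι] {l : Filter α}
    (r : ι → ι → Prop) (f : ι → ι → α → ℝ) {k c : ℝ}
    (h : ∀ a b, r a b → ∃ c', k ≤ c' ∧ Tendsto (f a b) l (𝓝 c')) (hc : c < k) :
    ∀ᶠ t in l, ∀ a b, r a b → c < f a b t := by
  refine eventually_all.2 fun a => eventually_all.2 fun b => ?_
  by_cases hab : r a b
  · obtain ⟨c', hkc', hlim⟩ := h a b hab
    exact (hlim.eventually (eventually_gt_nhds (hc.trans_le hkc'))).mono fun _ ht _ => ht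
  · exact Eventually.of_forall fun _ hab' => absurd hab' hab

theorem SimpleGraph.Connected.dist_sub_dist_le {α : Type*} {G : SimpleGraph α}
    (hconn : G.Connected) (u v y : α) : (G.dist u y : ℝ) - G.dist v y ≤ G.dist u v := by
  rw [sub_le_iff_le_add]
  exact_mod_cast hconn.dist_triangle

theorem sub_le_W1 {α : Type*} [Fintype α] (G : SimpleGraph α) {mu1 mu2 : α → ℝ}
    (hplan : ∃ pi, IsTransportPlan mu1 mu2 pi) {f : α → ℝ}
    (hf : ∀ u v, f u - f v ≤ G.dist u v) :
    ∑ v, f v * mu1 v - ∑ v, f v * mu2 v ≤ W1 G mu1 mu2 := by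
  obtain ⟨pi₀, hpi₀⟩ := hplan
  refine le_csInf ⟨_, pi₀, hpi₀, rfl⟩ ?_
  rintro _ ⟨pi, ⟨hpi, hmarg₁, hmarg₂⟩, rfl⟩
  calc ∑ v, f v * mu1 v - ∑ v, f v * mu2 v
      = ∑ u, ∑ v, (f u - f v) * pi u v := by
        simp only [sub_mul, Finset.sum_sub_distrib, ← Finset.mul_sum, hmarg₁]
        rw [Finset.sum_comm (f := fun u v => f v * pi u v)]
        simp only [← Finset.mul_sum, hmarg₂]
    _ ≤ ∑ u, ∑ v, (G.dist u v : ℝ) * pi u v := by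
        gcongr with u _ v _
        · exact hpi u v
        · exact hf u v

section muMeasure

variable (G : SimpleGraph V) [DecidableRel G.Adj]

theorem muMeasure_nonneg {p : ℝ} (hp0 : 0 ≤ p) (hp1 : p ≤ 1) (x v : V) :
    0 ≤ muMeasure G p x v := by
  unfold muMeasure
  split_ifs
  exacts [hp0, div_nonneg (sub_nonneg.2 hp1) (Nat.cast_nonneg _), le_rfl]

theorem sum_mul_muMeasure (p : ℝ) (x : V) (f : V → ℝ) :
    ∑ v, f v * muMeasure G p x v =
      f x * p + (∑ v ∈ G.neighborFinset x, f v) * ((1 - p) / G.degree x) := by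
  have hnbr : G.neighborFinset x ⊆ {x}ᶜ := fun v hv => by
    simpa [eq_comm] using G.ne_of_adj ((G.mem_neighborFinset x v).1 hv)
  rw [Fintype.sum_eq_add_sum_compl x, Finset.sum_mul, ← Finset.sum_subset hnbr]
  · simp only [muMeasure, if_pos]
    congr 1
    refine Finset.sum_congr rfl fun v hv => ?_
    rw [mem_neighborFinset] at hv
    simp [hv, hv.ne']
  · intro v hvx hv
    simp_all [muMeasure]

theorem sum_muMeasure (p : ℝ) {x : V} (hx : 0 < G.degree x) : ∑ v, muMeasure G p x v = 1 := by
  simpa [field] using sum_mul_muMeasure G p x 1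

theorem exists_isTransportPlan_muMeasure {p : ℝ} (hp0 : 0 ≤ p) (hp1 : p ≤ 1) {x y : V}
    (hx : 0 < G.degree x) (hy : 0 < G.degree y) :
    ∃ pi, IsTransportPlan (muMeasure G p x) (muMeasure G p y) pi :=
  ⟨fun u v => muMeasure G p x u * muMeasure G p y v,
    fun u v => mul_nonneg (muMeasure_nonneg G hp0 hp1 x u) (muMeasure_nonneg G hp0 hp1 y v),
    fun u => by rw [← Finset.mul_sum, sum_muMeasure G p hy, mul_one],
    fun v => by rw [← Finset.sum_mul, sum_muMeasure G p hx, one_mul]⟩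

theorem sum_dist_mul_muMeasure_self (p : ℝ) {y : V} (hy : 0 < G.degree y) :
    ∑ v, (G.dist v y : ℝ) * muMeasure G p y v = 1 - p := by
  have hnbr : ∑ v ∈ G.neighborFinset y, (G.dist v y : ℝ) = G.degree y := by
    rw [← card_neighborFinset_eq_degree, Finset.cast_card]
    refine Finset.sum_congr rfl fun v hv => ?_
    rw [dist_eq_one_iff_adj.2 ((G.mem_neighborFinset y v).1 hv).symm, Nat.cast_one]
  rw [sum_mul_muMeasure, hnbr, dist_self]
  field_simp
  ring

theorem dist_sub_le_sum_dist_mul_muMeasure {p : ℝ} (hp1 : p ≤ 1) {x : V} (hx : 0 < G.degree x)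
    (y : V) : G.dist x y - (1 - p) ≤ ∑ v, (G.dist v y : ℝ) * muMeasure G p x v := by
  have hnbr : ∑ v ∈ G.neighborFinset x, ((G.dist x y : ℝ) - 1) ≤
      ∑ v ∈ G.neighborFinset x, (G.dist v y : ℝ) := by
    refine Finset.sum_le_sum fun v hv => ?_
    have hxv := (G.mem_neighborFinset x v).1 hv
    have htri := hxv.reachable.dist_triangle_left y
    rw [dist_eq_one_iff_adj.2 hxv] at htri
    rw [sub_le_iff_le_add']
    exact_mod_cast htri
  rw [Finset.sum_const, card_neighborFinset_eq_degree, nsmul_eq_mul] at hnbr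
  have hx' : (0 : ℝ) < G.degree x := by exact_mod_cast hx
  calc (G.dist x y : ℝ) - (1 - p)
      = G.dist x y * p + G.degree x * (G.dist x y - 1) * ((1 - p) / G.degree x) := by
        field_simp
        ring
    _ ≤ _ := by
        rw [sum_mul_muMeasure]
        gcongr

theorem W1_le_of_le_kappaP_div {p c : ℝ} (hp1 : p < 1) {a b : V} (hab : G.Adj a b)
    (hc : c ≤ kappaP G p a b / (1 - p)) :
    W1 G (muMeasure G p a) (muMeasure G p b) ≤ 1 - c * (1 - p) := by
  rw [le_div_iff₀ (sub_pos.2 hp1), kappaP, dist_eq_one_iff_adj.2 hab] at hc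
  simp only [Nat.cast_one, div_one] at hc
  linarith

theorem dist_mul_le_two_of_le_kappaP_div (hconn : G.Connected) {p c : ℝ} (hp0 : 0 ≤ p)
    (hp1 : p < 1) (hc : ∀ a b, G.Adj a b → c ≤ kappaP G p a b / (1 - p)) (x y : V) :
    G.dist x y * c ≤ 2 := by
  rcases eq_or_ne x y with rfl | hxy
  · simp
  set F : V → ℝ := fun z => ∑ v, (G.dist v y : ℝ) * muMeasure G p z v
  have hF : ∀ a b, G.Adj a b → F a - F b ≤ 1 - c * (1 - p) := fun a b hab =>
    (sub_le_W1 G (exists_isTransportPlan_muMeasure G hp0 hp1.le hab.degree_pos_left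
      hab.degree_pos_right) (hconn.dist_sub_dist_le · · y)).trans
      (W1_le_of_le_kappaP_div G hp1 hab (hc a b hab))
  obtain ⟨w, hw⟩ := (hconn x y).exists_walk_length_eq_dist
  have hupper := w.sub_le_length_mul F hF
  have hx := dist_sub_le_sum_dist_mul_muMeasure G hp1.le ((hconn x y).degree_pos_left hxy) y
  have hy := sum_dist_mul_muMeasure_self G p ((hconn x y).degree_pos_right hxy)
  rw [hw] at hupper
  have : G.dist x y * c * (1 - p) ≤ 2 * (1 - p) := by linarith
  exact le_of_mul_le_mul_right this (sub_pos.2 hp1)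

end muMeasure

/-- Discrete Bonnet-Myers: if the Lin-Lu-Yau curvature
`κ(x,y) = lim_{p→1} κ_p(x,y)/(1-p)` of every edge is at least `k > 0`, then
`diam(G) ≤ 2/k`. -/
theorem stmt12 (G : SimpleGraph V) [DecidableRel G.Adj] (hconn : G.Connected)
    (k : ℝ) (hk : 0 < k)
    (h : ∀ x y, G.Adj x y → ∃ c : ℝ, k ≤ c ∧
      Filter.Tendsto (fun p => kappaP G p x y / (1 - p))
        (nhdsWithin 1 (Set.Iio 1)) (nhds c)) :
    (G.diam : ℝ) ≤ 2 / k := by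
  have : Nonempty V := hconn.nonempty
  obtain ⟨x, y, hxy⟩ := G.exists_dist_eq_diam
  rw [← hxy, le_div_iff₀ hk]
  have hlim : Tendsto (fun c => (G.dist x y : ℝ) * c) (𝓝[<] k) (𝓝 (G.dist x y * k)) :=
    (continuous_const_mul _).continuousWithinAt
  refine le_of_tendsto hlim (eventually_nhdsWithin_of_forall fun c hc => ?_)
  have hp : ∀ᶠ p in 𝓝[<] (1 : ℝ), p ∈ Set.Ioo 0 1 := Ioo_mem_nhdsLT one_pos
  obtain ⟨p, ⟨hp0, hp1⟩, hedge⟩ := (hp.and (eventually_forall_lt_of_tendsto G.Adj _ h hc)).exists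
  exact dist_mul_le_two_of_le_kappaP_div G hconn hp0.le hp1 (fun a b hab => (hedge a b hab).le) x y
end

section
/- Let G be an amply regular graph with parameters (n, d, α, β) with α = 1 and β > 1. Then diam(G) ≤ 2d/3. -/
/-!
Compare transport costs between the uniform measures on closed neighbourhoods `B(v)` (the
measures `muMeasure G (1 / (d + 1)) v`). For an edge `xy`, every vertex of
`N_x = Γ(x) \ ({y} ∪ Γ(y))` has exactly `β - 1` neighbours in `N_y`, because `α = 1`; so Hall's
theorem matches `N_x` with `N_y` along edges, and fixing the rest of `B(x)` moves `B(x)` onto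
`B(y)` at total cost `|N_x| = d - 2`. Chaining along a geodesic between vertices `u, w` at
distance `t = diam G` moves `B(u)` onto `B(w)` at cost at most `t (d - 2)`. Conversely every one
of the `d + 1` vertices moves at least `t - 2`, and `u` and the preimage of `w` one more, so
`(t - 2)(d + 1) + 2 ≤ t (d - 2)`, that is `3t ≤ 2d`.
-/

open Finset SimpleGraph

variable {V : Type*} [Fintype V] [DecidableEq V]

theorem Finset.exists_injective_of_le_card_bipartiteAbove {α β : Type*} [DecidableEq β]
    {s : Finset α} {t : Finset β} (r : α → β → Prop) [∀ a b, Decidable (r a b)] {k : ℕ}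
    (hk : 0 < k) (hs : ∀ a ∈ s, k ≤ #(t.bipartiteAbove r a))
    (ht : ∀ b ∈ t, #(s.bipartiteBelow r b) ≤ k) :
    ∃ f : s → β, Function.Injective f ∧ ∀ a, f a ∈ t ∧ r a (f a) := by
  let T (a : s) : Finset β := t.bipartiteAbove r a
  obtain ⟨f, hf, hfT⟩ := (all_card_le_biUnion_card_iff_exists_injective T).mp fun S => by
    refine Nat.le_of_mul_le_mul_right (card_mul_le_card_mul (fun (a : s) b => r a b) ?_ ?_) hk
    · intro a ha
      refine (hs a a.2).trans (card_le_card fun b hb => ?_)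
      exact (mem_bipartiteAbove _).mpr
        ⟨mem_biUnion.mpr ⟨a, ha, hb⟩, ((mem_bipartiteAbove _).mp hb).2⟩
    · intro b hb
      obtain ⟨a, -, hba⟩ := mem_biUnion.mp hb
      refine (card_le_card_of_injOn Subtype.val (fun a' ha' => ?_)
        Subtype.val_injective.injOn).trans (ht b ((mem_bipartiteAbove _).mp hba).1)
      exact (mem_bipartiteBelow _).mpr ⟨a'.2, ((mem_bipartiteBelow _).mp ha').2⟩
  exact ⟨f, hf, fun a => (mem_bipartiteAbove _).mp (hfT a)⟩

namespace SimpleGraph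

variable {G : SimpleGraph V} [DecidableRel G.Adj]

def closedNeighborFinset (G : SimpleGraph V) [DecidableRel G.Adj] (v : V) : Finset V :=
  insert v (G.neighborFinset v)

lemma mem_closedNeighborFinset {v w : V} : w ∈ G.closedNeighborFinset v ↔ w = v ∨ G.Adj v w := by
  simp [closedNeighborFinset]

lemma card_closedNeighborFinset (v : V) : #(G.closedNeighborFinset v) = G.degree v + 1 := by
  rw [closedNeighborFinset, card_insert_of_notMem (G.notMem_neighborFinset_self v),
    card_neighborFinset_eq_degree]

lemma dist_add_ite_le_one {v w : V} (hw : w ∈ G.closedNeighborFinset v) :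
    G.dist v w + (if w = v then 1 else 0) ≤ 1 := by
  rcases mem_closedNeighborFinset.mp hw with rfl | hvw
  · simp
  · simp [dist_eq_one_iff_adj.mpr hvw, hvw.ne']

lemma mem_Nset {x y v : V} : v ∈ Nset G x y ↔ G.Adj x v ∧ v ≠ y ∧ ¬G.Adj y v := by
  simp [Nset]

lemma card_Nset_add_two {x y : V} (hxy : G.Adj x y)
    (hα : #(G.neighborFinset x ∩ G.neighborFinset y) = 1) : #(Nset G x y) + 2 = G.degree x := by
  have hinter : G.neighborFinset x ∩ insert y (G.neighborFinset y)
      = insert y (G.neighborFinset x ∩ G.neighborFinset y) :=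
    inter_insert_of_mem ((mem_neighborFinset G x y).mpr hxy)
  have hy : y ∉ G.neighborFinset x ∩ G.neighborFinset y := by simp
  have hsplit := card_sdiff_add_card_inter (G.neighborFinset x) (insert y (G.neighborFinset y))
  rw [hinter, card_insert_of_notMem hy, hα] at hsplit
  rw [Nset, ← card_neighborFinset_eq_degree, ← hsplit]

lemma card_filter_adj_Nset {b : ℕ}
    (hα : ∀ x y, G.Adj x y → #(G.neighborFinset x ∩ G.neighborFinset y) ≤ 1)
    (hβ : ∀ x y, G.dist x y = 2 → #(G.neighborFinset x ∩ G.neighborFinset y) = b)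
    {x y u : V} (hxy : G.Adj x y) (hu : u ∈ Nset G x y) :
    #{v ∈ Nset G y x | G.Adj u v} = b - 1 := by
  obtain ⟨hxu, huy, hyu⟩ := mem_Nset.mp hu
  have hyu2 : G.dist y u = 2 := by
    have hle : G.dist y u ≤ 2 := G.dist_le (.cons hxy.symm (.cons hxu .nil))
    have h0 : G.dist y u ≠ 0 :=
      dist_ne_zero_iff_ne_and_reachable.mpr ⟨huy.symm, hxy.symm.reachable.trans hxu.reachable⟩
    have h1 : G.dist y u ≠ 1 := dist_eq_one_iff_adj.not.mpr hyu
    omega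
  have hx : x ∈ G.neighborFinset y ∩ G.neighborFinset u := by simp [hxy.symm, hxu.symm]
  suffices {v ∈ Nset G y x | G.Adj u v} = (G.neighborFinset y ∩ G.neighborFinset u).erase x by
    rw [this, card_erase_of_mem hx, hβ y u hyu2]
  ext v
  simp only [mem_filter, mem_Nset, mem_erase, mem_inter, mem_neighborFinset]
  constructor
  · rintro ⟨⟨hyv, hvx, -⟩, huv⟩
    exact ⟨hvx, hyv, huv⟩
  · rintro ⟨hvx, hyv, huv⟩
    refine ⟨⟨hyv, hvx, fun hxv => huy ?_⟩, huv⟩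
    -- `y` and `u` are both common neighbours of the adjacent pair `x, v`
    exact card_le_one.mp (hα x v hxv) u (by simp [hxu, huv.symm]) y (by simp [hxy, hyv.symm])

/-- An injection of total displacement at most `c` is a transport plan of cost `c / (d + 1)`
between the uniform measures on the two closed neighbourhoods of a `d`-regular graph. -/
def HasBallTransport (G : SimpleGraph V) [DecidableRel G.Adj] (x y : V) (c : ℕ) : Prop :=
  ∃ f : V → V, Set.InjOn f (G.closedNeighborFinset x) ∧
    Set.MapsTo f (G.closedNeighborFinset x) (G.closedNeighborFinset y) ∧
    ∑ v ∈ G.closedNeighborFinset x, G.dist v (f v) ≤ c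

lemma dist_add_ite_le_dist_add_two (hconn : G.Connected) {u w a b : V}
    (ha : a ∈ G.closedNeighborFinset u) (hb : b ∈ G.closedNeighborFinset w) :
    G.dist u w + ((if a = u then 1 else 0) + (if b = w then 1 else 0)) ≤ G.dist a b + 2 := by
  have hua := dist_add_ite_le_one ha
  have hwb := dist_add_ite_le_one hb
  have htri : G.dist u w ≤ G.dist u a + (G.dist a b + G.dist b w) :=
    hconn.dist_triangle.trans (Nat.add_le_add_left hconn.dist_triangle _)
  rw [dist_comm (u := b)] at htri
  linarith

lemma hasBallTransport_refl (x : V) : HasBallTransport G x x 0 :=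
  ⟨id, Set.injOn_id _, Set.mapsTo_id _, by simp⟩

lemma HasBallTransport.trans (hconn : G.Connected) {x y z : V} {c c' : ℕ}
    (h : HasBallTransport G x y c) (h' : HasBallTransport G y z c') :
    HasBallTransport G x z (c + c') := by
  obtain ⟨f, hf, hfmaps, hfc⟩ := h
  obtain ⟨g, hg, hgmaps, hgc⟩ := h'
  refine ⟨g ∘ f, hg.comp hf hfmaps, hgmaps.comp hfmaps, ?_⟩
  have hg_image : ∑ v ∈ G.closedNeighborFinset x, G.dist (f v) (g (f v)) ≤ c' :=
    calc ∑ v ∈ G.closedNeighborFinset x, G.dist (f v) (g (f v))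
        = ∑ w ∈ (G.closedNeighborFinset x).image f, G.dist w (g w) :=
          (sum_image (f := fun w => G.dist w (g w)) hf).symm
      _ ≤ ∑ w ∈ G.closedNeighborFinset y, G.dist w (g w) :=
          sum_le_sum_of_subset hfmaps.finsetImage_subset
      _ ≤ c' := hgc
  calc ∑ v ∈ G.closedNeighborFinset x, G.dist v (g (f v))
      ≤ ∑ v ∈ G.closedNeighborFinset x, (G.dist v (f v) + G.dist (f v) (g (f v))) :=
        sum_le_sum fun v _ => hconn.dist_triangle
    _ ≤ c + c' := by rw [sum_add_distrib]; exact add_le_add hfc hg_image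

lemma hasBallTransport_of_walk (hconn : G.Connected) {c : ℕ}
    (hedge : ∀ x y, G.Adj x y → HasBallTransport G x y c) {u w : V} (p : G.Walk u w) :
    HasBallTransport G u w (p.length * c) := by
  induction p with
  | nil => simpa using hasBallTransport_refl _
  | cons hxy _ ih =>
    rw [Walk.length_cons, add_mul, one_mul, add_comm]
    exact (hedge _ _ hxy).trans hconn ih

lemma HasBallTransport.dist_mul_le (hconn : G.Connected) {d c : ℕ} (hreg : G.IsRegularOfDegree d)
    {u w : V} (h : HasBallTransport G u w c) : G.dist u w * (d + 1) ≤ c + 2 * d := by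
  obtain ⟨f, hf, hfmaps, hfc⟩ := h
  have hcard (v : V) : #(G.closedNeighborFinset v) = d + 1 := by
    rw [card_closedNeighborFinset, hreg v]
  obtain ⟨v₀, hv₀, hfv₀⟩ := surjOn_of_injOn_of_card_le f hfmaps hf (by rw [hcard, hcard])
    (mem_closedNeighborFinset.mpr (.inl rfl))
  have hu : u ∈ G.closedNeighborFinset u := mem_closedNeighborFinset.mpr (.inl rfl)
  have hmove : ∀ v ∈ G.closedNeighborFinset u,
      G.dist u w + ((if v = u then 1 else 0) + (if v = v₀ then 1 else 0)) ≤ G.dist v (f v) + 2 := by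
    intro v hv
    have hv₀w : (if v = v₀ then 1 else 0) ≤ (if f v = w then 1 else 0) := by
      split_ifs <;> simp_all
    have := dist_add_ite_le_dist_add_two hconn hv (hfmaps hv)
    omega
  have hsum := sum_le_sum hmove
  simp only [sum_add_distrib, sum_ite_eq', sum_const, smul_eq_mul, hcard, if_pos hu,
    if_pos (mem_coe.mp hv₀)] at hsum
  linarith

lemma hasBallTransport_of_matching {x y : V} (hxy : G.Adj x y) (f : Nset G x y → V)
    (hf : Function.Injective f) (hfN : ∀ u : Nset G x y, f u ∈ Nset G y x)
    (hfadj : ∀ u : Nset G x y, G.Adj u (f u)) :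
    HasBallTransport G x y #(Nset G x y) := by
  set F : V → V := fun v => if h : v ∈ Nset G x y then f ⟨v, h⟩ else v
  have hNx : Nset G x y ⊆ G.closedNeighborFinset x := fun v hv =>
    mem_closedNeighborFinset.mpr (.inr (mem_Nset.mp hv).1)
  have hNy : Nset G y x ⊆ G.closedNeighborFinset y := fun v hv =>
    mem_closedNeighborFinset.mpr (.inr (mem_Nset.mp hv).1)
  have hfixed : ∀ v ∈ G.closedNeighborFinset x, v ∉ Nset G x y →
      v ∈ G.closedNeighborFinset y ∧ v ∉ Nset G y x := by
    intro v hv hvN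
    simp only [mem_closedNeighborFinset, mem_Nset] at hv hvN ⊢
    rcases hv with rfl | hxv
    · exact ⟨.inr hxy.symm, by simp⟩
    · by_cases hvy : v = y
      · exact ⟨.inl hvy, by simp [hvy]⟩
      · exact ⟨.inr (by tauto), by tauto⟩
  refine ⟨F, fun v hv v' hv' hvv' => ?_, fun v hv => ?_, ?_⟩
  · by_cases h : v ∈ Nset G x y <;> by_cases h' : v' ∈ Nset G x y <;>
      simp only [F, h, h', dite_true, dite_false] at hvv'
    · exact congrArg Subtype.val (hf hvv')
    · exact absurd (hvv' ▸ hfN _) (hfixed v' hv' h').2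
    · exact absurd (hvv' ▸ hfN _) (hfixed v hv h).2
    · exact hvv'
  · by_cases h : v ∈ Nset G x y
    · simpa [F, h] using hNy (hfN ⟨v, h⟩)
    · simpa [F, h] using (hfixed v hv h).1
  · calc ∑ v ∈ G.closedNeighborFinset x, G.dist v (F v)
        ≤ ∑ v ∈ G.closedNeighborFinset x, if v ∈ Nset G x y then 1 else 0 := by
          refine sum_le_sum fun v _ => ?_
          by_cases h : v ∈ Nset G x y
          · simp [F, h, dist_eq_one_iff_adj.mpr (hfadj ⟨v, h⟩)]
          · simp [F, h]
      _ = #(Nset G x y) := by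
          rw [sum_boole, filter_mem_eq_inter, inter_eq_right.mpr hNx, Nat.cast_id]

lemma hasBallTransport_of_adj {b : ℕ}
    (hα : ∀ x y, G.Adj x y → #(G.neighborFinset x ∩ G.neighborFinset y) ≤ 1)
    (hβ : ∀ x y, G.dist x y = 2 → #(G.neighborFinset x ∩ G.neighborFinset y) = b) (hb : 1 < b)
    {x y : V} (hxy : G.Adj x y) : HasBallTransport G x y #(Nset G x y) := by
  -- the adjacency between `Nset G x y` and `Nset G y x` is `(b - 1)`-biregular
  obtain ⟨f, hf, hfN⟩ := exists_injective_of_le_card_bipartiteAbove G.Adj (Nat.sub_pos_of_lt hb)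
    (fun u hu => (card_filter_adj_Nset hα hβ hxy hu).ge)
    (fun v hv => by
      simp only [bipartiteBelow, G.adj_comm _ v]
      exact (card_filter_adj_Nset hα hβ hxy.symm hv).le)
  exact hasBallTransport_of_matching hxy f hf (fun u => (hfN u).1) (fun u => (hfN u).2)

end SimpleGraph

/-- A connected amply regular graph with `α = 1 < β` has diameter at most `2d/3`. -/
theorem stmt13 (G : SimpleGraph V) [DecidableRel G.Adj] {n d a b : ℕ}
    (h : G.IsAmplyRegular n d a b) (ha : a = 1) (hb : 1 < b) (hconn : G.Connected) :
    (G.diam : ℝ) ≤ 2 * d / 3 := by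
  obtain ⟨-, hreg, hα, hβ⟩ := h
  subst ha
  have hNset : ∀ x y, G.Adj x y → #(Nset G x y) + 2 = d := fun x y hxy =>
    (card_Nset_add_two hxy (hα x y hxy)).trans (hreg x)
  have hedge : ∀ x y, G.Adj x y → HasBallTransport G x y (d - 2) := fun x y hxy => by
    rw [← hNset x y hxy, Nat.add_sub_cancel]
    exact hasBallTransport_of_adj (fun x y h => (hα x y h).le) hβ hb hxy
  have : Nonempty V := hconn.nonempty
  obtain ⟨u, w, huw⟩ := G.exists_dist_eq_diam
  obtain ⟨p, hp⟩ := hconn.exists_walk_length_eq_dist u w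
  have hcost := (hasBallTransport_of_walk hconn hedge p).dist_mul_le hconn hreg
  rw [hp, huw] at hcost
  suffices 3 * G.diam ≤ 2 * d by
    rw [le_div_iff₀ three_pos]
    exact_mod_cast (mul_comm _ _).trans_le this
  cases p with
  | nil => rw [Walk.length_nil] at hp; omega
  | cons hxy _ =>
    obtain ⟨e, rfl⟩ : ∃ e, d = e + 2 := ⟨_, (hNset _ _ hxy).symm⟩
    rw [Nat.add_sub_cancel] at hcost
    linarith
end
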